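/- Every self-adjoint extension of A^min_− ⊕ A^min_+ is of the form A_{Π,Θ} := (A^max_− ⊕ A^max_+)|dom(A_{Π,Θ}), where dom(A_{Π,Θ}) := {u ∈ dom(A^max_−) ⊕ dom(A^max_+) : (−[γ̂₁]u) ⊕ [γ̂₀]u ∈ dom(Θ), Π(γ₀(u + SL[γ̂₁]u − DL[γ̂₀]u) ⊕ γ₁(u + SL[γ̂₁]u − DL[γ̂₀]u)) = Θ((−[γ̂₁]u) ⊕ [γ̂₀]u)}. The set Z_{Π,Θ} := {z ∈ ρ(A) : Θ + Π M_z Π′ has a bounded inverse} is nonempty, ℂ\ℝ ⊆ Z_{Π,Θ} ⊆ ρ(A_{Π,Θ}), and for z ∈ Z_{Π,Θ}, (−A_{Π,Θ}+z)^{-1}u = (−A+z)^{-1}u + G_z Π′(Θ + Π M_z Π′)^{-1} Π (γ₀((−A+z)^{-1}u) ⊕ γ₁((−A+z)^{-1}u)). -/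

import Mathlib

/-!
STATEMENT 11 (Theorem `T1` of the paper: classification of the self-adjoint
extensions of `A^min_- ⊕ A^min_+` and Kreĭn formula (4.5)).

`A` is the elliptic operator, self-adjoint on `H²(ℝⁿ) = dom A ⊆ L²(ℝⁿ) = H`;
`τ u := γ₀ u ⊕ γ₁ u ∈ h := H^{3/2}(Γ) ⊕ H^{1/2}(Γ)` (realized below through the
isometric decomposition `i32, i12`), so that `A|ker τ = A^min_- ⊕ A^min_+` and
`(A|ker τ)* = A^max_- ⊕ A^max_+`.  For `z ∈ ρ(A)`,
`G_z(φ ⊕ φ') := SL_z φ + DL_z φ'` coincides with `(τ (-A+z̄)⁻¹)'`, and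
`M_z := τ(G_{λ₀} - G_z)`; the dual `h'` is identified with `h` (duality map
`Λ³ ⊕ Λ`), under which the identified layer potentials are `SLt`, `DLt`.

Conclusion: every self-adjoint extension `B` of `A^min_- ⊕ A^min_+` is of the
form `A_{Π,Θ}` (domain `{u₀ + G_{λ₀} ξ : Π τ u₀ = Θ ξ}`, action
`A u₀ + λ₀ G_{λ₀} ξ`, which via the jump relations is the description of
Theorem 4.1 in terms of `[γ̂₀]u, [γ̂₁]u`); `Z_{Π,Θ} ≠ ∅`,
`ℂ \ ℝ ⊆ Z_{Π,Θ} ⊆ ρ(A_{Π,Θ})` and the Kreĭn formula (4.5) holds.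
-/

open scoped InnerProductSpace
open Filter Topology

section
variable {H : Type*} [NormedAddCommGroup H] [InnerProductSpace ℂ H] [CompleteSpace H]

def IsResolvent (A : H →ₗ.[ℂ] H) (z : ℂ) (R : H →L[ℂ] H) : Prop :=
  (∀ x : H, R x ∈ A.domain) ∧
  (∀ (x : H) (hx : R x ∈ A.domain), -(A ⟨R x, hx⟩) + z • R x = x) ∧
  (∀ u : A.domain, R (-(A u) + z • (u : H)) = (u : H))

def InResolventSet (A : H →ₗ.[ℂ] H) (z : ℂ) : Prop := ∃ R, IsResolvent A z R

def IsSelfAdjointPMap (T : H →ₗ.[ℂ] H) : Prop :=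
  Dense (T.domain : Set H) ∧
  (∀ u v : T.domain, ⟪T u, (v : H)⟫_ℂ = ⟪(u : H), T v⟫_ℂ) ∧
  (∀ ψ w : H, (∀ u : T.domain, ⟪ψ, T u⟫_ℂ = ⟪w, (u : H)⟫_ℂ) →
    ∃ hψ : ψ ∈ T.domain, T ⟨ψ, hψ⟩ = w)

variable {h : Type*} [NormedAddCommGroup h] [InnerProductSpace ℂ h] [CompleteSpace h]

def IsSelfAdjointIn (K : Submodule ℂ h) (Θ : h →ₗ.[ℂ] h) : Prop :=
  Θ.domain ≤ K ∧ (∀ φ : Θ.domain, Θ φ ∈ K) ∧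
  (∀ x ∈ K, x ∈ closure (Θ.domain : Set h)) ∧
  (∀ φ ψ : Θ.domain, ⟪Θ φ, (ψ : h)⟫_ℂ = ⟪(φ : h), Θ ψ⟫_ℂ) ∧
  (∀ ψ ∈ K, ∀ w ∈ K, (∀ φ : Θ.domain, ⟪ψ, Θ φ⟫_ℂ = ⟪w, (φ : h)⟫_ℂ) →
      ∃ hψ : ψ ∈ Θ.domain, Θ ⟨ψ, hψ⟩ = w)

def IsOrthProjection (P : h →L[ℂ] h) : Prop :=
  IsIdempotentElem P ∧ ∀ x y : h, ⟪P x, y⟫_ℂ = ⟪x, P y⟫_ℂ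

def IsKreinInverse (P : h →L[ℂ] h) (Θ : h →ₗ.[ℂ] h) (Mz : h →L[ℂ] h)
    (W : h →L[ℂ] h) : Prop :=
  (∀ x : h, W (P x) ∈ Θ.domain) ∧
  (∀ (x : h) (hx : W (P x) ∈ Θ.domain), Θ ⟨W (P x), hx⟩ + P (Mz (W (P x))) = P x) ∧
  (∀ φ : Θ.domain, W (Θ φ + P (Mz (φ : h))) = (φ : h))

def InKreinSet (A : H →ₗ.[ℂ] H) (P : h →L[ℂ] h) (Θ : h →ₗ.[ℂ] h)
    (M : ℂ → h →L[ℂ] h) (z : ℂ) : Prop :=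
  InResolventSet A z ∧ ∃ W : h →L[ℂ] h, IsKreinInverse P Θ (M z) W

-- ## generic helpers

section HelpersNS
variable {E F : Type*} [NormedAddCommGroup E] [NormedSpace ℂ E]
  [NormedAddCommGroup F] [NormedSpace ℂ F]

lemma clm_injective_of_lb (f : E →L[ℂ] F) {c : ℝ} (hc : 0 < c)
    (hlb : ∀ x, c * ‖x‖ ≤ ‖f x‖) : Function.Injective f := by
  intro x y hxy
  have h0 : f (x - y) = 0 := by rw [map_sub, hxy, sub_self]
  have h1 := hlb (x - y)
  rw [h0, norm_zero] at h1
  have h2 : ‖x - y‖ = 0 := le_antisymm (by nlinarith [norm_nonneg (x - y)]) (norm_nonneg _)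
  exact sub_eq_zero.mp (norm_eq_zero.mp h2)

lemma clm_inverse (f : E →L[ℂ] F) {c : ℝ} (hc : 0 < c)
    (hlb : ∀ x, c * ‖x‖ ≤ ‖f x‖) (hs : Function.Surjective f) :
    ∃ g : F →L[ℂ] E, (∀ y, f (g y) = y) ∧ (∀ x, g (f x) = x) := by
  have hinj : Function.Injective f := clm_injective_of_lb f hc hlb
  have hbij : Function.Bijective (f : E →ₗ[ℂ] F) := ⟨hinj, hs⟩
  let e := LinearEquiv.ofBijective (f : E →ₗ[ℂ] F) hbij
  have hfe : ∀ y, f (e.symm y) = y := fun y => e.apply_symm_apply y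
  have hb : ∀ y, ‖e.symm.toLinearMap y‖ ≤ c⁻¹ * ‖y‖ := by
    intro y
    have := hlb (e.symm y)
    rw [hfe y] at this
    rw [le_inv_mul_iff₀ hc]
    exact this
  refine ⟨(e.symm.toLinearMap).mkContinuous c⁻¹ hb, fun y => ?_, fun x => ?_⟩
  · exact hfe y
  · exact e.symm_apply_apply x

lemma clm_closed_range_of_lb [CompleteSpace E] (f : E →L[ℂ] F) {c : ℝ} (hc : 0 < c)
    (hlb : ∀ x, c * ‖x‖ ≤ ‖f x‖) : IsClosed (Set.range f) := by
  rw [← isSeqClosed_iff_isClosed]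
  intro s y hs hy
  choose x hx using hs
  have hcauchy : CauchySeq (s) := hy.cauchySeq
  have hxc : CauchySeq x := by
    rw [Metric.cauchySeq_iff] at hcauchy ⊢
    intro ε hε
    obtain ⟨N, hN⟩ := hcauchy (c * ε) (by positivity)
    refine ⟨N, fun m hm n hn => ?_⟩
    have := hN m hm n hn
    have h2 : c * ‖x m - x n‖ ≤ ‖f (x m) - f (x n)‖ := by
      simpa [map_sub] using hlb (x m - x n)
    rw [dist_eq_norm] at this ⊢
    rw [hx m, hx n] at h2
    calc ‖x m - x n‖ ≤ c⁻¹ * ‖s m - s n‖ := by rw [le_inv_mul_iff₀ hc]; exact h2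
    _ < c⁻¹ * (c * ε) := by
        apply mul_lt_mul_of_pos_left this (by positivity)
    _ = ε := by field_simp
  obtain ⟨xl, hxl⟩ := cauchySeq_tendsto_of_complete hxc
  refine ⟨xl, ?_⟩
  have : Tendsto (fun n => f (x n)) atTop (𝓝 (f xl)) := (f.continuous.tendsto _).comp hxl
  simp_rw [hx] at this
  exact tendsto_nhds_unique this hy
end HelpersNS

section HilbertHelpers
variable {E F : Type*} [NormedAddCommGroup E] [InnerProductSpace ℂ E] [CompleteSpace E]
  [NormedAddCommGroup F] [InnerProductSpace ℂ F] [CompleteSpace F]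

lemma clm_inverse_of_lb_dense (f : E →L[ℂ] F) {c : ℝ} (hc : 0 < c)
    (hlb : ∀ x, c * ‖x‖ ≤ ‖f x‖)
    (hd : ∀ y : F, (∀ x : E, ⟪f x, y⟫_ℂ = 0) → y = 0) :
    ∃ g : F →L[ℂ] E, (∀ y, f (g y) = y) ∧ (∀ x, g (f x) = x) := by
  have hclosed : IsClosed (Set.range f) := clm_closed_range_of_lb f hc hlb
  have hsurj : Function.Surjective f := by
    have hr : (LinearMap.range (f : E →ₗ[ℂ] F))ᗮ = ⊥ := by
      rw [Submodule.eq_bot_iff]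
      intro y hy
      apply hd
      intro x
      exact (Submodule.mem_orthogonal _ _).mp hy (f x) (LinearMap.mem_range_self _ x)
    have htop := (Submodule.topologicalClosure_eq_top_iff).mpr hr
    have heq : (LinearMap.range (f : E →ₗ[ℂ] F)).topologicalClosure = LinearMap.range (f : E →ₗ[ℂ] F) := by
      apply le_antisymm _ (Submodule.le_topologicalClosure _)
      intro x hx
      have : x ∈ closure (LinearMap.range (f : E →ₗ[ℂ] F) : Set F) := hx
      rwa [show ((LinearMap.range (f : E →ₗ[ℂ] F) : Submodule ℂ F) : Set F) = Set.range f from by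
        ext v; simp [LinearMap.mem_range], hclosed.closure_eq] at this
    rw [heq] at htop
    exact LinearMap.range_eq_top.mp htop
  exact clm_inverse f hc hlb hsurj

lemma norm_inner_self_c (x : E) : ‖⟪x, x⟫_ℂ‖ = ‖x‖ ^ 2 := by
  rw [inner_self_eq_norm_sq_to_K, norm_pow, RCLike.norm_ofReal, abs_norm]

lemma right_inverse_of_surjective (f : E →L[ℂ] F) (hs : Function.Surjective f) :
    ∃ Y : F →L[ℂ] E, ∀ y, f (Y y) = y := by
  obtain ⟨C, hC0, hC⟩ := f.exists_preimage_norm_le hs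
  set a := ContinuousLinearMap.adjoint f with ha
  have halb : ∀ y : F, ‖y‖ ≤ C * ‖a y‖ := by
    intro y
    obtain ⟨x, hx, hxn⟩ := hC y
    have h1 : ⟪a y, x⟫_ℂ = ⟪y, y⟫_ℂ := by
      rw [ContinuousLinearMap.adjoint_inner_left, hx]
    have h2 : ‖y‖ ^ 2 ≤ ‖a y‖ * (C * ‖y‖) := by
      calc ‖y‖ ^ 2 = ‖⟪y, y⟫_ℂ‖ := (norm_inner_self_c y).symm
      _ = ‖⟪a y, x⟫_ℂ‖ := by rw [h1]
      _ ≤ ‖a y‖ * ‖x‖ := norm_inner_le_norm _ _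
      _ ≤ ‖a y‖ * (C * ‖y‖) := mul_le_mul_of_nonneg_left hxn (norm_nonneg _)
    rcases eq_or_lt_of_le (norm_nonneg y) with h | h
    · rw [← h]; positivity
    · nlinarith [norm_nonneg (a y)]
  set N := f.comp a with hN
  have hNlb0 : ∀ y : F, ‖y‖ ≤ (C * C) * ‖N y‖ := by
    intro y
    have h1 : ⟪a y, a y⟫_ℂ = ⟪y, N y⟫_ℂ := ContinuousLinearMap.adjoint_inner_left f (a y) y
    have h2 : ‖a y‖ ^ 2 ≤ ‖y‖ * ‖N y‖ := by
      calc ‖a y‖ ^ 2 = ‖⟪a y, a y⟫_ℂ‖ := (norm_inner_self_c (a y)).symm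
      _ = ‖⟪y, N y⟫_ℂ‖ := by rw [h1]
      _ ≤ ‖y‖ * ‖N y‖ := norm_inner_le_norm _ _
    have h3 := halb y
    rcases eq_or_lt_of_le (norm_nonneg y) with h | h
    · rw [← h]; positivity
    · have h4 : ‖y‖ * ‖y‖ ≤ ((C * C) * ‖N y‖) * ‖y‖ := by nlinarith [norm_nonneg (a y), norm_nonneg (N y)]
      exact le_of_mul_le_mul_right h4 h
  have hCC : (0:ℝ) < (C * C)⁻¹ := by positivity
  have hNlb : ∀ y, (C * C)⁻¹ * ‖y‖ ≤ ‖N y‖ := by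
    intro y
    have := mul_le_mul_of_nonneg_left (hNlb0 y) (le_of_lt hCC)
    rwa [inv_mul_cancel_left₀ (by positivity : (C*C) ≠ 0)] at this
  have hNd : ∀ y : F, (∀ x : F, ⟪N x, y⟫_ℂ = 0) → y = 0 := by
    intro y hy
    have h1 : ⟪N y, y⟫_ℂ = 0 := hy y
    have h2 : ⟪a y, a y⟫_ℂ = 0 := by
      rw [ContinuousLinearMap.adjoint_inner_left f (a y) y, ← inner_conj_symm]
      have h9 : ⟪f (a y), y⟫_ℂ = 0 := hy y
      rw [h9]; simp
    have h3 : a y = 0 := inner_self_eq_zero.mp h2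
    have := halb y
    rw [h3, norm_zero, mul_zero] at this
    exact norm_eq_zero.mp (le_antisymm this (norm_nonneg _))
  obtain ⟨g, hg1, hg2⟩ := clm_inverse_of_lb_dense N hCC hNlb hNd
  exact ⟨a.comp g, fun y => hg1 y⟩

lemma left_inverse_of_lb (f : E →L[ℂ] F) {c : ℝ} (hc : 0 < c)
    (hlb : ∀ x, c * ‖x‖ ≤ ‖f x‖) :
    ∃ J : F →L[ℂ] E, ∀ x, J (f x) = x := by
  set a := ContinuousLinearMap.adjoint f with ha
  set N := a.comp f with hN
  have hkey : ∀ x, ⟪N x, x⟫_ℂ = ⟪f x, f x⟫_ℂ := by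
    intro x
    rw [hN, ContinuousLinearMap.comp_apply, ContinuousLinearMap.adjoint_inner_left]
  have hNlb : ∀ x, (c * c) * ‖x‖ ≤ ‖N x‖ := by
    intro x
    have h2 : ‖f x‖ ^ 2 ≤ ‖N x‖ * ‖x‖ := by
      calc ‖f x‖ ^ 2 = ‖⟪f x, f x⟫_ℂ‖ := (norm_inner_self_c (f x)).symm
      _ = ‖⟪N x, x⟫_ℂ‖ := by rw [hkey]
      _ ≤ ‖N x‖ * ‖x‖ := norm_inner_le_norm _ _
    have h3 := hlb x
    rcases eq_or_lt_of_le (norm_nonneg x) with h | h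
    · rw [← h, mul_zero]; exact norm_nonneg _
    · have h4 : ((c * c) * ‖x‖) * ‖x‖ ≤ ‖N x‖ * ‖x‖ := by
        nlinarith [norm_nonneg (f x), norm_nonneg (N x),
          mul_le_mul h3 h3 (by positivity : (0:ℝ) ≤ c * ‖x‖) (norm_nonneg (f x))]
      exact le_of_mul_le_mul_right h4 h
  have hNd : ∀ y : E, (∀ x : E, ⟪N x, y⟫_ℂ = 0) → y = 0 := by
    intro y hy
    have h1 : ⟪N y, y⟫_ℂ = 0 := hy y
    rw [hkey] at h1
    have h3 : f y = 0 := inner_self_eq_zero.mp h1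
    have := hlb y
    rw [h3, norm_zero] at this
    have h2 : ‖y‖ = 0 := le_antisymm (by nlinarith) (norm_nonneg _)
    exact norm_eq_zero.mp h2
  obtain ⟨g, hg1, hg2⟩ := clm_inverse_of_lb_dense N (by positivity) hNlb hNd
  refine ⟨g.comp a, fun x => ?_⟩
  have hh : N x = a (f x) := rfl
  calc g (a (f x)) = g (N x) := by rw [hh]
  _ = x := hg2 x
end HilbertHelpers


-- ## self-adjoint partial map lemmas

lemma sa_limit {T : H →ₗ.[ℂ] H} (hT : IsSelfAdjointPMap T) {s : ℕ → T.domain} {u w : H}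
    (hu : Tendsto (fun n => ((s n : H))) atTop (𝓝 u))
    (hw : Tendsto (fun n => T (s n)) atTop (𝓝 w)) :
    ∃ hu' : u ∈ T.domain, T ⟨u, hu'⟩ = w := by
  apply hT.2.2
  intro v
  have h1 : Tendsto (fun n => ⟪(s n : H), T v⟫_ℂ) atTop (𝓝 ⟪u, T v⟫_ℂ) :=
    hu.inner tendsto_const_nhds
  have h2 : Tendsto (fun n => ⟪T (s n), (v : H)⟫_ℂ) atTop (𝓝 ⟪w, (v : H)⟫_ℂ) :=
    hw.inner tendsto_const_nhds
  have h3 : (fun n => ⟪(s n : H), T v⟫_ℂ) = fun n => ⟪T (s n), (v : H)⟫_ℂ := by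
    funext n; exact (hT.2.1 (s n) v).symm
  rw [h3] at h1
  exact tendsto_nhds_unique h1 h2

lemma sa_resolvent_nonreal {T : H →ₗ.[ℂ] H} (hT : IsSelfAdjointPMap T) {z : ℂ}
    (hz : z.im ≠ 0) : ∃ R, IsResolvent T z R := by
  classical
  -- the operator -T + z
  let S : T.domain →ₗ[ℂ] H :=
    (z • (T.domain.subtype : T.domain →ₗ[ℂ] H)) - T.toFun
  have hSapp : ∀ u : T.domain, S u = -(T u) + z • (u : H) := by
    intro u
    show z • (u : H) - T u = -(T u) + z • (u : H)
    abel
  -- the symmetric form is real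
  have hreal : ∀ u : T.domain, (⟪T u, (u : H)⟫_ℂ).im = 0 := by
    intro u
    have := hT.2.1 u u
    rw [← inner_conj_symm ((u : H)) (T u)] at this
    have h2 : (starRingEnd ℂ) ⟪T u, (u : H)⟫_ℂ = ⟪T u, (u : H)⟫_ℂ := by
      conv_rhs => rw [this]
    exact Complex.conj_eq_iff_im.mp h2
  -- lower bound
  have hlb : ∀ u : T.domain, |z.im| * ‖(u : H)‖ ≤ ‖S u‖ := by
    intro u
    have him : (⟪S u, (u : H)⟫_ℂ).im = -(z.im * ‖(u : H)‖ ^ 2) := by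
      rw [hSapp]
      rw [inner_add_left, inner_neg_left, inner_smul_left, inner_self_eq_norm_sq_to_K]
      simp [hreal u, Complex.mul_im, ← Complex.ofReal_pow]
    have h1 : |z.im| * ‖(u : H)‖ ^ 2 = |(⟪S u, (u : H)⟫_ℂ).im| := by
      rw [him, abs_neg, abs_mul]
      rw [abs_of_nonneg (by positivity : (0:ℝ) ≤ ‖(u : H)‖ ^ 2)]
    have h2 : |(⟪S u, (u : H)⟫_ℂ).im| ≤ ‖⟪S u, (u : H)⟫_ℂ‖ := Complex.abs_im_le_norm _
    have h3 : ‖⟪S u, (u : H)⟫_ℂ‖ ≤ ‖S u‖ * ‖(u : H)‖ := norm_inner_le_norm _ _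
    rcases eq_or_lt_of_le (norm_nonneg ((u : H))) with h | h
    · rw [← h, mul_zero]; exact norm_nonneg _
    · have h4 : (|z.im| * ‖(u : H)‖) * ‖(u : H)‖ ≤ (‖S u‖) * ‖(u : H)‖ := by
        calc (|z.im| * ‖(u : H)‖) * ‖(u : H)‖ = |z.im| * ‖(u : H)‖ ^ 2 := by ring
        _ ≤ ‖S u‖ * ‖(u : H)‖ := le_trans (le_trans (le_of_eq h1) h2) h3
      exact le_of_mul_le_mul_right h4 h
  -- injectivity of S
  have hSinj : Function.Injective S := by
    intro u v huv
    have h0 : S (u - v) = 0 := by rw [map_sub, huv, sub_self]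
    have h1 := hlb (u - v)
    rw [h0, norm_zero] at h1
    have h2 : ‖((u - v : T.domain) : H)‖ = 0 := by
      have := abs_pos.mpr hz
      nlinarith [norm_nonneg ((u - v : T.domain) : H)]
    have h3 : ((u : H) - (v : H)) = 0 := by
      rw [← norm_eq_zero]
      simpa using h2
    exact Subtype.coe_injective (sub_eq_zero.mp h3)
  -- range of S is closed
  have hRc : IsClosed (Set.range (fun u : T.domain => S u)) := by
    rw [← isSeqClosed_iff_isClosed]
    intro sq y hsq hy
    choose x hx using hsq
    have hx' : ∀ n, S (x n) = sq n := fun n => hx n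
    have hcauchy : CauchySeq sq := hy.cauchySeq
    have hxc : CauchySeq (fun n => ((x n : H))) := by
      rw [Metric.cauchySeq_iff] at hcauchy ⊢
      intro ε hε
      obtain ⟨N, hN⟩ := hcauchy (|z.im| * ε) (by positivity)
      refine ⟨N, fun m hm n hn => ?_⟩
      have hd := hN m hm n hn
      have h2 : |z.im| * ‖((x m : H)) - ((x n : H))‖ ≤ ‖S (x m) - S (x n)‖ := by
        have := hlb (x m - x n)
        rwa [map_sub, AddSubgroupClass.coe_sub] at this
      rw [dist_eq_norm] at hd ⊢
      rw [hx' m, hx' n] at h2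
      have hzim : (0:ℝ) < |z.im| := abs_pos.mpr hz
      calc ‖(x m : H) - (x n : H)‖ ≤ |z.im|⁻¹ * ‖sq m - sq n‖ := by
            rw [le_inv_mul_iff₀ hzim]; exact h2
      _ < |z.im|⁻¹ * (|z.im| * ε) := mul_lt_mul_of_pos_left hd (by positivity)
      _ = ε := by field_simp
    obtain ⟨xl, hxl⟩ := cauchySeq_tendsto_of_complete hxc
    -- T (x n) converges
    have hTx : ∀ n, T (x n) = z • ((x n : H)) - sq n := by
      intro n
      have := hSapp (x n)
      rw [hx' n] at this
      rw [this]; abel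
    have hTconv : Tendsto (fun n => T (x n)) atTop (𝓝 (z • xl - y)) := by
      rw [show (fun n => T (x n)) = fun n => z • ((x n : H)) - sq n from funext hTx]
      exact ((hxl.const_smul z)).sub hy
    obtain ⟨hmem, heq⟩ := sa_limit hT hxl hTconv
    refine ⟨⟨xl, hmem⟩, ?_⟩
    show S ⟨xl, hmem⟩ = y
    rw [hSapp, heq]
    simp
  -- density of the range of S
  have hRd : ∀ y : H, (∀ u : T.domain, ⟪S u, y⟫_ℂ = 0) → y = 0 := by
    intro y hy
    have h1 : ∀ u : T.domain, ⟪y, T u⟫_ℂ = ⟪(starRingEnd ℂ z) • y, (u : H)⟫_ℂ := by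
      intro u
      have h2 : ⟪y, S u⟫_ℂ = 0 := by
        rw [← inner_conj_symm, hy u]; simp
      rw [hSapp] at h2
      rw [inner_add_right, inner_neg_right, inner_smul_right] at h2
      have h3 : ⟪y, T u⟫_ℂ = z * ⟪y, (u : H)⟫_ℂ := by linear_combination -h2
      rw [h3, inner_smul_left]
      simp
    obtain ⟨hmem, heq⟩ := hT.2.2 y ((starRingEnd ℂ z) • y) h1
    -- y is an eigenvector with eigenvalue conj z
    have h4 : ⟪T ⟨y, hmem⟩, y⟫_ℂ = ⟪(y : H), T ⟨y, hmem⟩⟫_ℂ := hT.2.1 ⟨y, hmem⟩ ⟨y, hmem⟩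
    rw [heq, inner_smul_left, inner_smul_right] at h4
    simp only [RingHom.id_apply, RingHomCompTriple.comp_apply, Complex.conj_conj] at h4
    have h5 : (z - (starRingEnd ℂ) z) * ⟪y, y⟫_ℂ = 0 := by
      linear_combination h4
    rcases mul_eq_zero.mp h5 with h6 | h6
    · exfalso
      apply hz
      have h7 := congrArg Complex.im h6
      simp only [Complex.sub_im, Complex.conj_im, Complex.zero_im] at h7
      linarith
    · exact inner_self_eq_zero.mp h6
  -- surjectivity of S
  have hSsurj : Function.Surjective (fun u : T.domain => S u) := by
    intro y
    by_contra hcon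
    push_neg at hcon
    have hym : y ∈ (LinearMap.range S : Submodule ℂ H) → False := by
      intro hmem
      obtain ⟨u, hu⟩ := hmem
      exact hcon u hu
    -- decompose y w.r.t. the closed range
    have hRc' : IsClosed ((LinearMap.range S : Submodule ℂ H) : Set H) := by
      have : ((LinearMap.range S : Submodule ℂ H) : Set H) = Set.range (fun u : T.domain => S u) := by
        ext v; simp [LinearMap.mem_range]
      rw [this]; exact hRc
    haveI : CompleteSpace ((LinearMap.range S : Submodule ℂ H)) := hRc'.completeSpace_coe
    set Ran := (LinearMap.range S : Submodule ℂ H)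
    have hyr : y - (Submodule.orthogonalProjection Ran y : H) ∈ Ranᗮ :=
      Submodule.sub_starProjection_mem_orthogonal y
    set r := y - (Submodule.orthogonalProjection Ran y : H) with hr
    have hr0 : r = 0 := by
      apply hRd
      intro u
      have := (Submodule.mem_orthogonal Ran r).mp hyr (S u) (LinearMap.mem_range_self S u)
      exact this
    have : y = (Submodule.orthogonalProjection Ran y : H) := by
      have := sub_eq_zero.mp hr0
      exact this
    apply hym
    rw [this]
    exact SetLike.coe_mem _
  -- build the resolvent
  have hex : ∀ y : H, ∃ u : T.domain, S u = y := hSsurj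
  choose Rf hRf using hex
  have hRadd : ∀ y₁ y₂ : H, Rf (y₁ + y₂) = Rf y₁ + Rf y₂ := by
    intro y₁ y₂
    apply hSinj
    rw [map_add, hRf, hRf, hRf]
  have hRsmul : ∀ (c : ℂ) (y : H), Rf (c • y) = c • Rf y := by
    intro c y
    apply hSinj
    rw [map_smul, hRf, hRf]
  let Rlin : H →ₗ[ℂ] H :=
    { toFun := fun y => ((Rf y : H)),
      map_add' := by
        intro y₁ y₂
        show ((Rf (y₁ + y₂) : H)) = ((Rf y₁ : H)) + ((Rf y₂ : H))
        rw [hRadd]; simp,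
      map_smul' := by
        intro c y
        show ((Rf (c • y) : H)) = c • ((Rf y : H))
        rw [hRsmul]; simp }
  have hzim : (0:ℝ) < |z.im| := abs_pos.mpr hz
  have hRbound : ∀ y : H, ‖Rlin y‖ ≤ |z.im|⁻¹ * ‖y‖ := by
    intro y
    have := hlb (Rf y)
    rw [hRf] at this
    rw [le_inv_mul_iff₀ hzim]
    exact this
  let R : H →L[ℂ] H := Rlin.mkContinuous (|z.im|⁻¹) hRbound
  have hRapp : ∀ y, R y = ((Rf y : H)) := fun y => rfl
  have hRmem : ∀ y : H, R y ∈ T.domain := by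
    intro y; rw [hRapp]; exact SetLike.coe_mem _
  refine ⟨R, hRmem, ?_, ?_⟩
  · intro x hx
    have h1 : (⟨R x, hx⟩ : T.domain) = Rf x := Subtype.ext (hRapp x)
    rw [h1, hRapp]
    have h2 := hSapp (Rf x)
    rw [hRf x] at h2
    exact h2.symm
  · intro u
    have h1 : -(T u) + z • (u : H) = S u := (hSapp u).symm
    rw [h1, hRapp]
    have : Rf (S u) = u := hSinj (by rw [hRf])
    rw [this]


lemma resolvent_adjoint {T : H →ₗ.[ℂ] H} (hT : IsSelfAdjointPMap T) {z : ℂ} {R : H →L[ℂ] H}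
    (hR : IsResolvent T z R) :
    IsResolvent T (starRingEnd ℂ z) (ContinuousLinearMap.adjoint R) := by
  set R' := ContinuousLinearMap.adjoint R with hR'def
  have hadj : ∀ (x v : H), ⟪R' x, v⟫_ℂ = ⟪x, R v⟫_ℂ := fun x v =>
    ContinuousLinearMap.adjoint_inner_left R v x
  have hkey : ∀ x : H, ∃ hm : R' x ∈ T.domain, T ⟨R' x, hm⟩ = (starRingEnd ℂ z) • R' x - x := by
    intro x
    apply hT.2.2
    intro u
    have h1 : ⟪R' x, -(T u) + z • (u : H)⟫_ℂ = ⟪x, (u : H)⟫_ℂ := by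
      rw [hadj, hR.2.2 u]
    rw [inner_add_right, inner_neg_right, inner_smul_right] at h1
    have h2 : ⟪R' x, T u⟫_ℂ = z * ⟪R' x, (u : H)⟫_ℂ - ⟪x, (u : H)⟫_ℂ := by
      linear_combination -h1
    rw [h2, inner_sub_left, inner_smul_left]
    simp
  refine ⟨fun x => (hkey x).1, ?_, ?_⟩
  · intro x hx
    have heq := (hkey x).2
    have : T ⟨R' x, hx⟩ = (starRingEnd ℂ z) • R' x - x := heq
    rw [this]
    abel
  · intro u
    apply ext_inner_right ℂ
    intro v
    rw [hadj]
    have h1 : ⟪-(T u) + (starRingEnd ℂ z) • (u : H), R v⟫_ℂ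
        = -⟪T u, R v⟫_ℂ + z * ⟪(u : H), R v⟫_ℂ := by
      rw [inner_add_left, inner_neg_left, inner_smul_left]
      simp
    rw [h1]
    have h2 : ⟪T u, R v⟫_ℂ = ⟪(u : H), T ⟨R v, hR.1 v⟩⟫_ℂ := hT.2.1 u ⟨R v, hR.1 v⟩
    rw [h2]
    have h3 : ⟪(u : H), v⟫_ℂ = ⟪(u : H), -(T ⟨R v, hR.1 v⟩) + z • R v⟫_ℂ := by
      rw [hR.2.1 v (hR.1 v)]
    rw [h3, inner_add_right, inner_neg_right, inner_smul_right]


lemma inner_zero_of_dense {S : Set H} (hd : Dense S) {w : H}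
    (hw : ∀ x ∈ S, ⟪w, x⟫_ℂ = 0) : w = 0 := by
  have hc : Continuous fun y : H => ⟪w, y⟫_ℂ := continuous_const.inner continuous_id
  have heq : (fun y : H => ⟪w, y⟫_ℂ) = fun _ => (0:ℂ) :=
    Continuous.ext_on hd hc continuous_const hw
  have : ⟪w, w⟫_ℂ = 0 := congrFun heq w
  exact inner_self_eq_zero.mp this


set_option maxHeartbeats 4000000 in
set_option synthInstance.maxHeartbeats 1000000 in
theorem statement_11
    {H32 H12 : Type*}
    [NormedAddCommGroup H32] [InnerProductSpace ℂ H32] [CompleteSpace H32]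
    [NormedAddCommGroup H12] [InnerProductSpace ℂ H12] [CompleteSpace H12]
    -- the elliptic operator `A`, self-adjoint on `H² = dom A`
    (A : H →ₗ.[ℂ] H) (hA : IsSelfAdjointPMap A)
    (vneg : ℝ) (hres : ∀ μ : ℝ, vneg < μ → InResolventSet A (μ : ℂ))
    -- `h = H^{3/2}(Γ) ⊕ H^{1/2}(Γ)`: isometric orthogonal decomposition
    (i32 : H32 →L[ℂ] h) (i12 : H12 →L[ℂ] h)
    (hiso32 : ∀ a : H32, ‖i32 a‖ = ‖a‖) (hiso12 : ∀ b : H12, ‖i12 b‖ = ‖b‖)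
    (horth : ∀ (a : H32) (b : H12), ⟪i32 a, i12 b⟫_ℂ = 0)
    (hspan : ∀ x : h, ∃ (a : H32) (b : H12), x = i32 a + i12 b)
    -- the traces `γ₀, γ₁` on `H²(ℝⁿ)` and `τ = γ₀ ⊕ γ₁`
    (γ₀ : A.domain →ₗ[ℂ] H32) (γ₁ : A.domain →ₗ[ℂ] H12)
    (τ : A.domain →ₗ[ℂ] h)
    (hτ : ∀ u : A.domain, τ u = i32 (γ₀ u) + i12 (γ₁ u))
    (hτcont : ∃ C : ℝ, ∀ u : A.domain, ‖τ u‖ ≤ C * (‖(u : H)‖ + ‖A u‖))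
    (hτsurj : Function.Surjective τ)
    (hkerdense : Dense {x : H | ∃ u : A.domain, (u : H) = x ∧ τ u = 0})
    -- `λ₀ > max V_neg ⊇` and the identified potentials `G_z = SL_z ⊕ DL_z`
    (lam0 : ℝ) (hlam0 : vneg < lam0)
    (G : ℂ → h →L[ℂ] H)
    (hG : ∀ (z : ℂ) (R : H →L[ℂ] H), IsResolvent A (starRingEnd ℂ z) R →
      ∀ (ξ : h) (x : H) (hx : R x ∈ A.domain),
        ⟪G z ξ, x⟫_ℂ = ⟪ξ, τ ⟨R x, hx⟩⟫_ℂ)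
    (SLt : ℂ → H32 →L[ℂ] H) (DLt : ℂ → H12 →L[ℂ] H)
    (hGdec : ∀ (z : ℂ) (a : H32) (b : H12), G z (i32 a + i12 b) = SLt z a + DLt z b)
    -- the Weyl family `M_z = τ (G_{λ₀} - G_z)`
    (M : ℂ → h →L[ℂ] h)
    (hM : ∀ (z : ℂ) (ξ : h) (hmem : G (lam0 : ℂ) ξ - G z ξ ∈ A.domain),
      M z ξ = τ ⟨G (lam0 : ℂ) ξ - G z ξ, hmem⟩)
    -- `B`: an arbitrary self-adjoint extension of `A^min_- ⊕ A^min_+ = A|ker τ`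
    (B : H →ₗ.[ℂ] H) (hB : IsSelfAdjointPMap B)
    (hBextS : ∀ u : A.domain, τ u = 0 →
      ∃ hu : (u : H) ∈ B.domain, B ⟨(u : H), hu⟩ = A u) :
    ∃ (P : h →L[ℂ] h) (Θ : h →ₗ.[ℂ] h),
      IsOrthProjection P ∧
      IsSelfAdjointIn (LinearMap.range (P : h →ₗ[ℂ] h)) Θ ∧
      -- `B = A_{Π,Θ}`: `u = u₀ + G_{λ₀} ξ` with `Π τ u₀ = Θ ξ` (equivalently, by
      -- the jump relations, `ξ = (-[γ̂₁]u) ⊕ [γ̂₀]u` and the boundary condition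
      -- of Theorem 4.1), `B u = A u₀ + λ₀ G_{λ₀} ξ`
      (∀ u : B.domain, ∃ (u₀ : H) (hu₀ : u₀ ∈ A.domain) (ξ : h) (hξ : ξ ∈ Θ.domain),
        (u : H) = u₀ + G (lam0 : ℂ) ξ ∧ P (τ ⟨u₀, hu₀⟩) = Θ ⟨ξ, hξ⟩ ∧
        B u = A ⟨u₀, hu₀⟩ + (lam0 : ℂ) • G (lam0 : ℂ) ξ) ∧
      (∀ (u₀ : H) (hu₀ : u₀ ∈ A.domain) (ξ : h) (hξ : ξ ∈ Θ.domain),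
        P (τ ⟨u₀, hu₀⟩) = Θ ⟨ξ, hξ⟩ →
        ∃ hu : u₀ + G (lam0 : ℂ) ξ ∈ B.domain,
          B ⟨u₀ + G (lam0 : ℂ) ξ, hu⟩ = A ⟨u₀, hu₀⟩ + (lam0 : ℂ) • G (lam0 : ℂ) ξ) ∧
      -- `Z_{Π,Θ} ≠ ∅`
      (∃ z : ℂ, InKreinSet A P Θ M z) ∧
      -- `ℂ \ ℝ ⊆ Z_{Π,Θ}`
      (∀ z : ℂ, z.im ≠ 0 → InKreinSet A P Θ M z) ∧
      -- `Z_{Π,Θ} ⊆ ρ(A_{Π,Θ})` and the Kreĭn formula (4.5):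
      -- `(-A_{Π,Θ}+z)⁻¹ u = (-A+z)⁻¹ u
      --    + G_z Π' (Θ + Π M_z Π')⁻¹ Π (γ₀((-A+z)⁻¹u) ⊕ γ₁((-A+z)⁻¹u))`
      (∀ z : ℂ, InKreinSet A P Θ M z →
        ∀ (R : H →L[ℂ] H), IsResolvent A z R →
        ∀ (W : h →L[ℂ] h), IsKreinInverse P Θ (M z) W →
        ∃ RB : H →L[ℂ] H, IsResolvent B z RB ∧
          ∀ (x : H) (hx : R x ∈ A.domain),
            RB x = R x + G z (W (P (i32 (γ₀ ⟨R x, hx⟩) + i12 (γ₁ ⟨R x, hx⟩))))) := by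
  classical
  obtain ⟨R₀, hR₀⟩ := hres lam0 hlam0
  obtain ⟨CT, hCT⟩ := hτcont
  -- continuity of the trace of a resolvent
  have TCL : ∀ (z : ℂ) (R : H →L[ℂ] H) (hR : IsResolvent A z R),
      ∃ Tz : H →L[ℂ] h, ∀ x : H, Tz x = τ ⟨R x, hR.1 x⟩ := by
    intro z R hR
    let Rres : H →ₗ[ℂ] A.domain := (R : H →ₗ[ℂ] H).codRestrict A.domain hR.1
    let ℓ : H →ₗ[ℂ] h := τ.comp Rres
    have happ : ∀ x, ℓ x = τ ⟨R x, hR.1 x⟩ := fun x => rfl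
    have hAval : ∀ x : H, A ⟨R x, hR.1 x⟩ = z • R x - x := by
      intro x
      have h0 := hR.2.1 x (hR.1 x)
      have h1 : z • R x - (-(A ⟨R x, hR.1 x⟩) + z • R x) = z • R x - x := by rw [h0]
      rw [← h1]; abel
    have hbd : ∀ x : H, ‖ℓ x‖ ≤ (max CT 0 * (‖R‖ + ‖z‖ * ‖R‖ + 1)) * ‖x‖ := by
      intro x
      have h1 := hCT ⟨R x, hR.1 x⟩
      rw [hAval x] at h1
      have h2 : ‖R x‖ ≤ ‖R‖ * ‖x‖ := R.le_opNorm x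
      have h3 : ‖z • R x - x‖ ≤ ‖z‖ * (‖R‖ * ‖x‖) + ‖x‖ := by
        calc ‖z • R x - x‖ ≤ ‖z • R x‖ + ‖x‖ := norm_sub_le _ _
        _ = ‖z‖ * ‖R x‖ + ‖x‖ := by rw [norm_smul]
        _ ≤ ‖z‖ * (‖R‖ * ‖x‖) + ‖x‖ := by
            have := mul_le_mul_of_nonneg_left h2 (norm_nonneg z); linarith
      have h4 : ‖R x‖ + ‖z • R x - x‖ ≤ (‖R‖ + ‖z‖ * ‖R‖ + 1) * ‖x‖ := by
        have : (‖R‖ + ‖z‖ * ‖R‖ + 1) * ‖x‖ = ‖R‖ * ‖x‖ + (‖z‖ * (‖R‖ * ‖x‖) + ‖x‖) := by ring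
        rw [this]
        exact add_le_add h2 h3
      calc ‖ℓ x‖ = ‖τ ⟨R x, hR.1 x⟩‖ := by rw [happ]
      _ ≤ CT * (‖R x‖ + ‖z • R x - x‖) := h1
      _ ≤ max CT 0 * (‖R x‖ + ‖z • R x - x‖) := by
          apply mul_le_mul_of_nonneg_right (le_max_left _ _) (by positivity)
      _ ≤ max CT 0 * ((‖R‖ + ‖z‖ * ‖R‖ + 1) * ‖x‖) := by
          apply mul_le_mul_of_nonneg_left h4 (le_max_right _ _)
      _ = (max CT 0 * (‖R‖ + ‖z‖ * ‖R‖ + 1)) * ‖x‖ := by ring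
    exact ⟨ℓ.mkContinuous _ hbd, fun x => rfl⟩
  obtain ⟨Tc, hTc⟩ := TCL (lam0:ℂ) R₀ hR₀
  -- conjugation fact
  have hconj0 : (starRingEnd ℂ) ((lam0 : ℝ) : ℂ) = ((lam0 : ℝ) : ℂ) := Complex.conj_ofReal lam0
  have hR₀bar : IsResolvent A (starRingEnd ℂ ((lam0:ℝ):ℂ)) R₀ := by rw [hconj0]; exact hR₀
  have hG0 : ∀ (ξ : h) (x : H), ⟪G ((lam0:ℝ):ℂ) ξ, x⟫_ℂ = ⟪ξ, Tc x⟫_ℂ := by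
    intro ξ x
    rw [hTc x]
    exact hG ((lam0:ℝ):ℂ) R₀ hR₀bar ξ x (hR₀.1 x)
  -- surjectivity of Tc
  have hTcSurj : Function.Surjective Tc := by
    intro ξ
    obtain ⟨u, hu⟩ := hτsurj ξ
    refine ⟨-(A u) + ((lam0:ℝ):ℂ) • (u : H), ?_⟩
    rw [hTc]
    have he : (⟨R₀ (-(A u) + ((lam0:ℝ):ℂ) • (u : H)), hR₀.1 _⟩ : A.domain) = u :=
      Subtype.ext (hR₀.2.2 u)
    rw [he, hu]
  -- G₀ is injective and bounded below
  have hG0inj : ∀ ξ : h, G ((lam0:ℝ):ℂ) ξ = 0 → ξ = 0 := by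
    intro ξ hξ
    obtain ⟨x, hx⟩ := hTcSurj ξ
    have h1 : ⟪G ((lam0:ℝ):ℂ) ξ, x⟫_ℂ = ⟪ξ, ξ⟫_ℂ := by rw [hG0, hx]
    rw [hξ, inner_zero_left] at h1
    exact inner_self_eq_zero.mp h1.symm
  obtain ⟨CS, hCS0, hCS⟩ := Tc.exists_preimage_norm_le hTcSurj
  have hG0lb : ∀ ξ : h, CS⁻¹ * ‖ξ‖ ≤ ‖G ((lam0:ℝ):ℂ) ξ‖ := by
    intro ξ
    obtain ⟨x, hx, hxn⟩ := hCS ξ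
    have h1 : ⟪G ((lam0:ℝ):ℂ) ξ, x⟫_ℂ = ⟪ξ, ξ⟫_ℂ := by rw [hG0, hx]
    have h2 : ‖ξ‖ ^ 2 ≤ ‖G ((lam0:ℝ):ℂ) ξ‖ * (CS * ‖ξ‖) := by
      calc ‖ξ‖ ^ 2 = ‖⟪ξ, ξ⟫_ℂ‖ := (norm_inner_self_c ξ).symm
      _ = ‖⟪G ((lam0:ℝ):ℂ) ξ, x⟫_ℂ‖ := by rw [h1]
      _ ≤ ‖G ((lam0:ℝ):ℂ) ξ‖ * ‖x‖ := norm_inner_le_norm _ _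
      _ ≤ ‖G ((lam0:ℝ):ℂ) ξ‖ * (CS * ‖ξ‖) := mul_le_mul_of_nonneg_left hxn (norm_nonneg _)
    rcases eq_or_lt_of_le (norm_nonneg ξ) with hn | hn
    · rw [← hn, mul_zero]; exact norm_nonneg _
    · have h4 : ‖ξ‖ * ‖ξ‖ ≤ (‖G ((lam0:ℝ):ℂ) ξ‖ * CS) * ‖ξ‖ := by nlinarith
      have h5 : ‖ξ‖ ≤ ‖G ((lam0:ℝ):ℂ) ξ‖ * CS := le_of_mul_le_mul_right h4 hn
      have h6 : CS⁻¹ * ‖ξ‖ ≤ CS⁻¹ * (‖G ((lam0:ℝ):ℂ) ξ‖ * CS) :=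
        mul_le_mul_of_nonneg_left h5 (by positivity)
      calc CS⁻¹ * ‖ξ‖ ≤ CS⁻¹ * (‖G ((lam0:ℝ):ℂ) ξ‖ * CS) := h6
      _ = ‖G ((lam0:ℝ):ℂ) ξ‖ := by field_simp
  obtain ⟨J, hJ⟩ := left_inverse_of_lb (G ((lam0:ℝ):ℂ)) (by positivity : (0:ℝ) < CS⁻¹) hG0lb
  have hKc : IsClosed (Set.range (G ((lam0:ℝ):ℂ))) :=
    clm_closed_range_of_lb _ (by positivity : (0:ℝ) < CS⁻¹) hG0lb
  have hker : ∀ v : A.domain, τ v = 0 → Tc (-(A v) + ((lam0:ℝ):ℂ) • (v : H)) = 0 := by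
    intro v hv
    rw [hTc]
    have he : (⟨R₀ (-(A v) + ((lam0:ℝ):ℂ) • (v : H)), hR₀.1 _⟩ : A.domain) = v :=
      Subtype.ext (hR₀.2.2 v)
    rw [he, hv]
  have DOMCAP : ∀ ξ : h, G ((lam0:ℝ):ℂ) ξ ∈ A.domain → G ((lam0:ℝ):ℂ) ξ = 0 := by
    intro ξ hg
    set g : A.domain := ⟨G ((lam0:ℝ):ℂ) ξ, hg⟩ with hgdef
    have hw : -(A g) + ((lam0:ℝ):ℂ) • (g : H) = 0 := by
      apply inner_zero_of_dense hkerdense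
      intro x hx
      obtain ⟨v, hvx, hvτ⟩ := hx
      have h1 : ⟪-(A g) + ((lam0:ℝ):ℂ) • (g : H), (v : H)⟫_ℂ
          = ⟪(g : H), -(A v) + ((lam0:ℝ):ℂ) • (v : H)⟫_ℂ := by
        rw [inner_add_left, inner_neg_left, inner_smul_left,
          inner_add_right, inner_neg_right, inner_smul_right, hA.2.1 g v, hconj0]
      have h2 : ⟪(g : H), -(A v) + ((lam0:ℝ):ℂ) • (v : H)⟫_ℂ
          = ⟪ξ, Tc (-(A v) + ((lam0:ℝ):ℂ) • (v : H))⟫_ℂ := hG0 ξ _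
      rw [← hvx, h1, h2, hker v hvτ, inner_zero_right]
    have h3 : R₀ (-(A g) + ((lam0:ℝ):ℂ) • (g : H)) = (g : H) := hR₀.2.2 g
    rw [hw, map_zero] at h3
    exact h3.symm
  have UNIQ : ∀ (u₀ : H) (hu₀ : u₀ ∈ A.domain) (u₀' : H) (hu₀' : u₀' ∈ A.domain) (ξ ξ' : h),
      u₀ + G ((lam0:ℝ):ℂ) ξ = u₀' + G ((lam0:ℝ):ℂ) ξ' → u₀ = u₀' ∧ ξ = ξ' := by
    intro u₀ hu₀ u₀' hu₀' ξ ξ' heq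
    have h2 : G ((lam0:ℝ):ℂ) ξ' - G ((lam0:ℝ):ℂ) ξ = u₀ - u₀' := by
      rw [sub_eq_sub_iff_add_eq_add]
      calc G ((lam0:ℝ):ℂ) ξ' + u₀' = u₀' + G ((lam0:ℝ):ℂ) ξ' := add_comm _ _
      _ = u₀ + G ((lam0:ℝ):ℂ) ξ := heq.symm
    have hmem : G ((lam0:ℝ):ℂ) (ξ' - ξ) ∈ A.domain := by
      rw [map_sub, h2]
      exact A.domain.sub_mem hu₀ hu₀'
    have h4 := DOMCAP _ hmem
    have h5 : ξ' - ξ = 0 := hG0inj _ h4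
    rw [map_sub, h2] at h4
    constructor
    · exact sub_eq_zero.mp h4
    · exact (sub_eq_zero.mp h5).symm
  have RANG : ∀ y : H, (∀ x : H, Tc x = 0 → ⟪y, x⟫_ℂ = 0) →
      ∃ ξ : h, y = G ((lam0:ℝ):ℂ) ξ := by
    intro y hy
    set K₀ := LinearMap.range (G ((lam0:ℝ):ℂ) : h →ₗ[ℂ] H) with hK₀def
    have hKc' : IsClosed (K₀ : Set H) := by
      have hset : (K₀ : Set H) = Set.range (G ((lam0:ℝ):ℂ)) := by
        ext v; simp [hK₀def, LinearMap.mem_range]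
      rw [hset]; exact hKc
    haveI : CompleteSpace K₀ := hKc'.completeSpace_coe
    obtain ⟨ξ, hξ⟩ := LinearMap.mem_range.mp (Submodule.orthogonalProjection K₀ y).2
    set p := ((Submodule.orthogonalProjection K₀ y : K₀) : H) with hpdef
    have hr : y - p ∈ K₀ᗮ := Submodule.sub_starProjection_mem_orthogonal y
    have h1 : ∀ ζ : h, ⟪G ((lam0:ℝ):ℂ) ζ, y - p⟫_ℂ = 0 := by
      intro ζ
      exact (Submodule.mem_orthogonal K₀ (y - p)).mp hr _ (LinearMap.mem_range_self _ ζ)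
    have h2 : Tc (y - p) = 0 := by
      have h3 : ⟪Tc (y - p), Tc (y - p)⟫_ℂ = 0 := by
        rw [← hG0]; exact h1 _
      exact inner_self_eq_zero.mp h3
    have h3 : ⟪y, y - p⟫_ℂ = 0 := hy _ h2
    have h4 : ⟪p, y - p⟫_ℂ = 0 := by
      have := h1 ξ
      rwa [show G ((lam0:ℝ):ℂ) ξ = p from hξ] at this
    have h5 : ⟪y - p, y - p⟫_ℂ = 0 := by rw [inner_sub_left, h3, h4, sub_zero]
    have h6 : y = p := by
      have := sub_eq_zero.mp (inner_self_eq_zero.mp h5)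
      exact this
    exact ⟨ξ, by rw [h6, ← hξ]; rfl⟩
  -- decomposition of elements of dom B
  have DEC : ∀ u : B.domain, ∃ (u₀ : H) (hu₀ : u₀ ∈ A.domain) (ξ : h),
      (u : H) = u₀ + G ((lam0:ℝ):ℂ) ξ ∧
      B u = A ⟨u₀, hu₀⟩ + ((lam0:ℝ):ℂ) • G ((lam0:ℝ):ℂ) ξ := by
    intro u
    set x := -(B u) + ((lam0:ℝ):ℂ) • (u : H) with hxdef
    set u₀ := R₀ x with hu₀def
    have hu₀ : u₀ ∈ A.domain := hR₀.1 x
    have hAu₀ : -(A ⟨u₀, hu₀⟩) + ((lam0:ℝ):ℂ) • u₀ = x := hR₀.2.1 x hu₀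
    have hperp : ∀ x' : H, Tc x' = 0 → ⟪(u : H) - u₀, x'⟫_ℂ = 0 := by
      intro x' h0
      set v : A.domain := ⟨R₀ x', hR₀.1 x'⟩ with hvdef
      have hτv : τ v = 0 := by
        have := hTc x'
        rw [h0] at this
        exact this.symm
      obtain ⟨hvB, hBv⟩ := hBextS v hτv
      have hx' : x' = -(A v) + ((lam0:ℝ):ℂ) • (v : H) := (hR₀.2.1 x' (hR₀.1 x')).symm
      have e0 : ⟪(u : H), A v⟫_ℂ = ⟪B u, (v : H)⟫_ℂ := by
        rw [← hBv]
        exact (hB.2.1 u ⟨(v : H), hvB⟩).symm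
      have e1 : ⟪(u : H), x'⟫_ℂ = ⟪-(B u) + ((lam0:ℝ):ℂ) • (u : H), (v : H)⟫_ℂ := by
        rw [hx', inner_add_right, inner_neg_right, inner_smul_right,
          inner_add_left, inner_neg_left, inner_smul_left, hconj0, e0]
      have e2 : ⟪u₀, x'⟫_ℂ = ⟪-(A ⟨u₀, hu₀⟩) + ((lam0:ℝ):ℂ) • u₀, (v : H)⟫_ℂ := by
        rw [hx', inner_add_right, inner_neg_right, inner_smul_right,
          inner_add_left, inner_neg_left, inner_smul_left, hconj0,
          hA.2.1 ⟨u₀, hu₀⟩ v]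
      rw [inner_sub_left, e1, e2, hAu₀, ← hxdef]
      exact sub_self _
    obtain ⟨ξ, hξ⟩ := RANG _ hperp
    have hueq : (u : H) = u₀ + G ((lam0:ℝ):ℂ) ξ := by
      rw [← hξ]; abel
    refine ⟨u₀, hu₀, ξ, hueq, ?_⟩
    have hBu : B u = ((lam0:ℝ):ℂ) • (u : H) - x := by rw [hxdef]; abel
    have hAu : A ⟨u₀, hu₀⟩ = ((lam0:ℝ):ℂ) • u₀ - x := by rw [← hAu₀]; abel
    rw [hBu, hAu, hueq, smul_add]
    abel
  have VAL : ∀ (u₀ : H) (hu₀ : u₀ ∈ A.domain) (ξ : h)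
      (hu : u₀ + G ((lam0:ℝ):ℂ) ξ ∈ B.domain),
      B ⟨u₀ + G ((lam0:ℝ):ℂ) ξ, hu⟩ = A ⟨u₀, hu₀⟩ + ((lam0:ℝ):ℂ) • G ((lam0:ℝ):ℂ) ξ := by
    intro u₀ hu₀ ξ hu
    obtain ⟨u₀', hu₀', ξ', heq, hval⟩ := DEC ⟨_, hu⟩
    have heq' : u₀ + G ((lam0:ℝ):ℂ) ξ = u₀' + G ((lam0:ℝ):ℂ) ξ' := heq
    obtain ⟨h1, h2⟩ := UNIQ u₀ hu₀ u₀' hu₀' ξ ξ' heq'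
    have h3 : (⟨u₀', hu₀'⟩ : A.domain) = ⟨u₀, hu₀⟩ := Subtype.ext h1.symm
    rw [hval, h3, ← h2]
  have PAIR : ∀ (w₀ : H) (hw₀ : w₀ ∈ A.domain) (η : h),
      ⟪G ((lam0:ℝ):ℂ) η, -(A ⟨w₀, hw₀⟩) + ((lam0:ℝ):ℂ) • w₀⟫_ℂ = ⟪η, τ ⟨w₀, hw₀⟩⟫_ℂ := by
    intro w₀ hw₀ η
    rw [hG0, hTc]
    have he : (⟨R₀ (-(A ⟨w₀, hw₀⟩) + ((lam0:ℝ):ℂ) • w₀), hR₀.1 _⟩ : A.domain) = ⟨w₀, hw₀⟩ :=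
      Subtype.ext (hR₀.2.2 ⟨w₀, hw₀⟩)
    rw [he]
  have PAIR' : ∀ (w₀ : H) (hw₀ : w₀ ∈ A.domain) (η : h),
      ⟪-(A ⟨w₀, hw₀⟩) + ((lam0:ℝ):ℂ) • w₀, G ((lam0:ℝ):ℂ) η⟫_ℂ = ⟪τ ⟨w₀, hw₀⟩, η⟫_ℂ := by
    intro w₀ hw₀ η
    rw [← inner_conj_symm, PAIR, inner_conj_symm]
  have GRN : ∀ (u₀ : H) (hu₀ : u₀ ∈ A.domain) (ξ : h)
      (huB : u₀ + G ((lam0:ℝ):ℂ) ξ ∈ B.domain)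
      (v₀ : H) (hv₀ : v₀ ∈ A.domain) (ζ : h)
      (hvB : v₀ + G ((lam0:ℝ):ℂ) ζ ∈ B.domain),
      ⟪ξ, τ ⟨v₀, hv₀⟩⟫_ℂ = ⟪τ ⟨u₀, hu₀⟩, ζ⟫_ℂ := by
    intro u₀ hu₀ ξ huB v₀ hv₀ ζ hvB
    have hsym : ⟪B ⟨u₀ + G ((lam0:ℝ):ℂ) ξ, huB⟩, v₀ + G ((lam0:ℝ):ℂ) ζ⟫_ℂ
        = ⟪u₀ + G ((lam0:ℝ):ℂ) ξ, B ⟨v₀ + G ((lam0:ℝ):ℂ) ζ, hvB⟩⟫_ℂ :=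
      hB.2.1 ⟨_, huB⟩ ⟨_, hvB⟩
    rw [VAL u₀ hu₀ ξ huB, VAL v₀ hv₀ ζ hvB] at hsym
    simp only [inner_add_left, inner_add_right, inner_smul_left, inner_smul_right,
      hconj0] at hsym
    have hAsym : ⟪A ⟨u₀, hu₀⟩, v₀⟫_ℂ = ⟪u₀, A ⟨v₀, hv₀⟩⟫_ℂ := hA.2.1 ⟨u₀, hu₀⟩ ⟨v₀, hv₀⟩
    have pu' := PAIR' u₀ hu₀ ζ
    have pv := PAIR v₀ hv₀ ξ
    simp only [inner_add_left, inner_add_right, inner_neg_left, inner_neg_right,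
      inner_smul_left, inner_smul_right, hconj0] at pu' pv
    linear_combination hsym - hAsym + pu' - pv
  have MAX : ∀ ξh ηh : h,
      (∀ (v₀ : H) (hv₀ : v₀ ∈ A.domain) (ζ : h), v₀ + G ((lam0:ℝ):ℂ) ζ ∈ B.domain →
        ⟪ηh, ζ⟫_ℂ = ⟪ξh, τ ⟨v₀, hv₀⟩⟫_ℂ) →
      ∃ (u₀ : H) (hu₀ : u₀ ∈ A.domain), τ ⟨u₀, hu₀⟩ = ηh ∧
        u₀ + G ((lam0:ℝ):ℂ) ξh ∈ B.domain := by
    intro ξh ηh hyp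
    obtain ⟨w₀, hw₀τ⟩ := hτsurj ηh
    have key : ∀ v : B.domain, ⟪(w₀ : H) + G ((lam0:ℝ):ℂ) ξh, B v⟫_ℂ
        = ⟪A w₀ + ((lam0:ℝ):ℂ) • G ((lam0:ℝ):ℂ) ξh, (v : H)⟫_ℂ := by
      intro v
      obtain ⟨v₀, hv₀, ζ, heq, hval⟩ := DEC v
      have hmem : v₀ + G ((lam0:ℝ):ℂ) ζ ∈ B.domain := heq ▸ v.2
      rw [heq, hval]
      have e3 := hyp v₀ hv₀ ζ hmem
      have hAsym2 : ⟪A w₀, v₀⟫_ℂ = ⟪(w₀ : H), A ⟨v₀, hv₀⟩⟫_ℂ := hA.2.1 w₀ ⟨v₀, hv₀⟩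
      have pw : ⟪-(A w₀) + ((lam0:ℝ):ℂ) • (w₀ : H), G ((lam0:ℝ):ℂ) ζ⟫_ℂ = ⟪ηh, ζ⟫_ℂ := by
        have := PAIR' (w₀ : H) w₀.2 ζ
        rw [Subtype.coe_eta] at this
        rw [this, hw₀τ]
      have pv := PAIR v₀ hv₀ ξh
      simp only [inner_add_left, inner_add_right, inner_neg_left, inner_neg_right,
        inner_smul_left, inner_smul_right, hconj0] at pw pv ⊢
      linear_combination pw - pv + e3 - hAsym2
    obtain ⟨hmem, _⟩ := hB.2.2 ((w₀ : H) + G ((lam0:ℝ):ℂ) ξh)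
      (A w₀ + ((lam0:ℝ):ℂ) • G ((lam0:ℝ):ℂ) ξh) key
    refine ⟨(w₀ : H), w₀.2, ?_, hmem⟩
    rw [Subtype.coe_eta, hw₀τ]
  -- the multivalued part of the boundary relation
  set Msub : Submodule ℂ h := Submodule.map τ (B.domain.comap A.domain.subtype)
    with hMsubdef
  have hMsub_mem : ∀ η : h,
      η ∈ Msub ↔ ∃ (d : H) (hdA : d ∈ A.domain), d ∈ B.domain ∧ τ ⟨d, hdA⟩ = η := by
    intro η
    rw [hMsubdef]
    simp only [Submodule.mem_map, Submodule.mem_comap, Submodule.coe_subtype]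
    constructor
    · rintro ⟨u, hu, hτu⟩
      refine ⟨(u : H), u.2, hu, ?_⟩
      rw [Subtype.coe_eta]
      exact hτu
    · rintro ⟨d, hdA, hdB, hτd⟩
      exact ⟨⟨d, hdA⟩, hdB, hτd⟩
  set K : Submodule ℂ h := Msubᗮ with hKdef
  have hKclosed : IsClosed (K : Set h) := Msub.isClosed_orthogonal
  haveI : CompleteSpace K := hKclosed.completeSpace_coe
  set P : h →L[ℂ] h := K.subtypeL.comp (Submodule.orthogonalProjection K) with hPdef
  have Papp : ∀ x : h, P x = ((Submodule.orthogonalProjection K x : K) : h) := fun x => rfl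
  have Pmem : ∀ x : h, P x ∈ K := fun x => (Submodule.orthogonalProjection K x).2
  have Pid : ∀ x ∈ K, P x = x := by
    intro x hx
    have := Submodule.orthogonalProjectionOnto_mem_subspace_eq_self (⟨x, hx⟩ : K)
    rw [Papp]
    exact congrArg Subtype.val this
  have PP : ∀ x : h, P (P x) = P x := fun x => Pid _ (Pmem x)
  have Psym : ∀ x y : h, ⟪P x, y⟫_ℂ = ⟪x, P y⟫_ℂ := fun x y =>
    Submodule.inner_starProjection_left_eq_right K x y
  have Pzero : ∀ x ∈ Msub, P x = 0 := by
    intro x hx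
    have hx' : x ∈ Kᗮ := Submodule.le_orthogonal_orthogonal Msub hx
    rw [Papp, Submodule.orthogonalProjectionOnto_apply_of_mem_orthogonal hx']
    rfl
  have PranK : LinearMap.range (P : h →ₗ[ℂ] h) = K := by
    apply le_antisymm
    · rintro y ⟨x, rfl⟩
      exact Pmem x
    · intro x hx
      exact ⟨x, Pid x hx⟩
  -- the domain of the boundary operator
  let D : Submodule ℂ h :=
    { carrier := {ξ : h | ∃ (u₀ : H) (hu₀ : u₀ ∈ A.domain),
        u₀ + G ((lam0:ℝ):ℂ) ξ ∈ B.domain}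
      add_mem' := by
        rintro ξ₁ ξ₂ ⟨u₁, h₁, hB₁⟩ ⟨u₂, h₂, hB₂⟩
        refine ⟨u₁ + u₂, A.domain.add_mem h₁ h₂, ?_⟩
        have he : u₁ + u₂ + G ((lam0:ℝ):ℂ) (ξ₁ + ξ₂)
            = (u₁ + G ((lam0:ℝ):ℂ) ξ₁) + (u₂ + G ((lam0:ℝ):ℂ) ξ₂) := by
          rw [map_add]; abel
        rw [he]
        exact B.domain.add_mem hB₁ hB₂
      zero_mem' := by
        refine ⟨0, A.domain.zero_mem, ?_⟩
        have he : (0:H) + G ((lam0:ℝ):ℂ) (0:h) = 0 := by rw [map_zero, add_zero]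
        rw [he]
        exact B.domain.zero_mem
      smul_mem' := by
        rintro c ξ ⟨u₀, hu₀, hB₀⟩
        refine ⟨c • u₀, A.domain.smul_mem c hu₀, ?_⟩
        have he : c • u₀ + G ((lam0:ℝ):ℂ) (c • ξ)
            = c • (u₀ + G ((lam0:ℝ):ℂ) ξ) := by
          rw [map_smul, smul_add]
        rw [he]
        exact B.domain.smul_mem c hB₀ }
  have hD_mem : ∀ ξ : h, ξ ∈ D ↔ ∃ (u₀ : H) (hu₀ : u₀ ∈ A.domain),
      u₀ + G ((lam0:ℝ):ℂ) ξ ∈ B.domain := fun ξ => Iff.rfl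
  -- well-definedness of the boundary operator
  have WD : ∀ (ξ : h) (u₀ : H) (hu₀ : u₀ ∈ A.domain)
      (huB : u₀ + G ((lam0:ℝ):ℂ) ξ ∈ B.domain)
      (u₀' : H) (hu₀' : u₀' ∈ A.domain)
      (huB' : u₀' + G ((lam0:ℝ):ℂ) ξ ∈ B.domain),
      P (τ ⟨u₀, hu₀⟩) = P (τ ⟨u₀', hu₀'⟩) := by
    intro ξ u₀ hu₀ huB u₀' hu₀' huB'
    have hd : u₀ - u₀' ∈ A.domain := A.domain.sub_mem hu₀ hu₀'
    have hdB : u₀ - u₀' ∈ B.domain := by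
      have he : u₀ - u₀' = (u₀ + G ((lam0:ℝ):ℂ) ξ) - (u₀' + G ((lam0:ℝ):ℂ) ξ) := by abel
      rw [he]
      exact B.domain.sub_mem huB huB'
    have hτd : τ ⟨u₀ - u₀', hd⟩ = τ ⟨u₀, hu₀⟩ - τ ⟨u₀', hu₀'⟩ := by
      have he : (⟨u₀ - u₀', hd⟩ : A.domain) = (⟨u₀, hu₀⟩ : A.domain) - ⟨u₀', hu₀'⟩ := rfl
      rw [he, map_sub]
    have hmem : τ ⟨u₀ - u₀', hd⟩ ∈ Msub := (hMsub_mem _).mpr ⟨u₀ - u₀', hd, hdB, rfl⟩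
    have h0 := Pzero _ hmem
    rw [hτd, map_sub] at h0
    exact sub_eq_zero.mp h0
  -- construct the boundary operator Θ
  have hDw : ∀ ξ : D, ∃ (u₀ : H) (hu₀ : u₀ ∈ A.domain),
      u₀ + G ((lam0:ℝ):ℂ) (ξ : h) ∈ B.domain := fun ξ => ξ.2
  choose w₀f hw₀fA hw₀fB using hDw
  let Θlin : D →ₗ[ℂ] h :=
    { toFun := fun ξ => P (τ ⟨w₀f ξ, hw₀fA ξ⟩)
      map_add' := by
        intro ξ ζ
        have hsum : (w₀f ξ + w₀f ζ) + G ((lam0:ℝ):ℂ) ((ξ : h) + (ζ : h)) ∈ B.domain := by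
          have he : (w₀f ξ + w₀f ζ) + G ((lam0:ℝ):ℂ) ((ξ : h) + (ζ : h))
              = (w₀f ξ + G ((lam0:ℝ):ℂ) (ξ : h)) + (w₀f ζ + G ((lam0:ℝ):ℂ) (ζ : h)) := by
            rw [map_add]; abel
          rw [he]
          exact B.domain.add_mem (hw₀fB ξ) (hw₀fB ζ)
        have h1 := WD ((ξ : h) + (ζ : h)) (w₀f (ξ + ζ)) (hw₀fA _) (hw₀fB (ξ + ζ))
          (w₀f ξ + w₀f ζ) (A.domain.add_mem (hw₀fA ξ) (hw₀fA ζ)) hsum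
        have he2 : (⟨w₀f ξ + w₀f ζ, A.domain.add_mem (hw₀fA ξ) (hw₀fA ζ)⟩ : A.domain)
            = (⟨w₀f ξ, hw₀fA ξ⟩ : A.domain) + ⟨w₀f ζ, hw₀fA ζ⟩ := rfl
        rw [he2, map_add, map_add] at h1
        exact h1
      map_smul' := by
        intro c ξ
        have hsm : (c • w₀f ξ) + G ((lam0:ℝ):ℂ) (c • (ξ : h)) ∈ B.domain := by
          have he : (c • w₀f ξ) + G ((lam0:ℝ):ℂ) (c • (ξ : h))
              = c • (w₀f ξ + G ((lam0:ℝ):ℂ) (ξ : h)) := by rw [map_smul, smul_add]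
          rw [he]
          exact B.domain.smul_mem c (hw₀fB ξ)
        have h1 := WD (c • (ξ : h)) (w₀f (c • ξ)) (hw₀fA _) (hw₀fB (c • ξ))
          (c • w₀f ξ) (A.domain.smul_mem c (hw₀fA ξ)) hsm
        have he2 : (⟨c • w₀f ξ, A.domain.smul_mem c (hw₀fA ξ)⟩ : A.domain)
            = c • (⟨w₀f ξ, hw₀fA ξ⟩ : A.domain) := rfl
        rw [he2, map_smul, map_smul] at h1
        exact h1 }
  set Θ : h →ₗ.[ℂ] h := ⟨D, Θlin⟩ with hΘdef
  have ΘSPEC : ∀ (ξ : h) (hξ : ξ ∈ D) (u₀ : H) (hu₀ : u₀ ∈ A.domain)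
      (huB : u₀ + G ((lam0:ℝ):ℂ) ξ ∈ B.domain),
      Θ ⟨ξ, hξ⟩ = P (τ ⟨u₀, hu₀⟩) := by
    intro ξ hξ u₀ hu₀ huB
    exact WD ξ (w₀f ⟨ξ, hξ⟩) (hw₀fA _) (hw₀fB ⟨ξ, hξ⟩) u₀ hu₀ huB
  have ΘK : ∀ φ : D, Θlin φ ∈ K := fun φ => Pmem _
  have hG00 : G ((lam0:ℝ):ℂ) (0:h) = 0 := map_zero _
  have hDperpM : ∀ ξ ∈ D, ∀ η ∈ Msub, ⟪η, ξ⟫_ℂ = 0 := by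
    intro ξ hξ η hη
    obtain ⟨v₀, hv₀, hvB⟩ := (hD_mem ξ).mp hξ
    obtain ⟨d, hdA, hdB, hτd⟩ := (hMsub_mem η).mp hη
    have hdB' : d + G ((lam0:ℝ):ℂ) (0:h) ∈ B.domain := by
      rw [hG00, add_zero]; exact hdB
    have h1 := GRN d hdA 0 hdB' v₀ hv₀ ξ hvB
    rw [hτd] at h1
    rw [← h1, inner_zero_left]
  have hDK : D ≤ K := by
    intro ξ hξ
    exact (Submodule.mem_orthogonal Msub ξ).mpr (fun η hη => hDperpM ξ hξ η hη)
  have hMclosed : ∀ η ∈ closure (Msub : Set h), η ∈ Msub := by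
    intro η hη
    have hyp : ∀ (v₀ : H) (hv₀ : v₀ ∈ A.domain) (ζ : h),
        v₀ + G ((lam0:ℝ):ℂ) ζ ∈ B.domain → ⟪η, ζ⟫_ℂ = ⟪(0:h), τ ⟨v₀, hv₀⟩⟫_ℂ := by
      intro v₀ hv₀ ζ hvB
      rw [inner_zero_left]
      have hζD : ζ ∈ D := (hD_mem ζ).mpr ⟨v₀, hv₀, hvB⟩
      have hcl : IsClosed {y : h | ⟪y, ζ⟫_ℂ = 0} :=
        isClosed_eq (continuous_id.inner continuous_const) continuous_const
      have hsub : (Msub : Set h) ⊆ {y : h | ⟪y, ζ⟫_ℂ = 0} := fun η' hη' =>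
        hDperpM ζ hζD η' hη'
      exact (closure_minimal hsub hcl) hη
    obtain ⟨u₀, hu₀, hτu, hmemB⟩ := MAX 0 η hyp
    rw [hG00, add_zero] at hmemB
    exact (hMsub_mem η).mpr ⟨u₀, hu₀, hmemB, hτu⟩
  have hKperp : Kᗮ = Msub := by
    rw [hKdef, Submodule.orthogonal_orthogonal_eq_closure]
    apply le_antisymm
    · intro x hx
      apply hMclosed
      rw [← Submodule.topologicalClosure_coe]
      exact hx
    · exact Submodule.le_topologicalClosure Msub
  have PzeroInv : ∀ x : h, P x = 0 → x ∈ Msub := by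
    intro x hP
    have h1 : x - P x ∈ Kᗮ := Submodule.sub_starProjection_mem_orthogonal x
    rw [hP, sub_zero, hKperp] at h1
    exact h1
  have hKMperp : ∀ x ∈ K, ∀ η ∈ Msub, ⟪x, η⟫_ℂ = 0 := by
    intro x hx η hη
    have := (Submodule.mem_orthogonal Msub x).mp hx η hη
    rw [← inner_conj_symm, this, map_zero]
  -- resolvent calculus kit
  have AVAL : ∀ (z' : ℂ) (Rz' : H →L[ℂ] H) (hRz' : IsResolvent A z' Rz') (x : H),
      A ⟨Rz' x, hRz'.1 x⟩ = z' • Rz' x - x := by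
    intro z' Rz' hRz' x
    have h0 := hRz'.2.1 x (hRz'.1 x)
    have h1 : z' • Rz' x - (-(A ⟨Rz' x, hRz'.1 x⟩) + z' • Rz' x) = z' • Rz' x - x := by
      rw [h0]
    rw [← h1]; abel
  have LRES2 : ∀ (w z' : ℂ) (Rw Rz' : H →L[ℂ] H), IsResolvent A w Rw →
      IsResolvent A z' Rz' → ∀ x : H, Rw x - Rz' x = (z' - w) • Rw (Rz' x) := by
    intro w z' Rw Rz' hRw hRz' x
    have hmem : Rw x - Rz' x ∈ A.domain := A.domain.sub_mem (hRw.1 x) (hRz'.1 x)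
    have hsub : (⟨Rw x - Rz' x, hmem⟩ : A.domain)
        = (⟨Rw x, hRw.1 x⟩ : A.domain) - ⟨Rz' x, hRz'.1 x⟩ := rfl
    have harg : -(A ⟨Rw x - Rz' x, hmem⟩) + w • (Rw x - Rz' x) = (z' - w) • Rz' x := by
      rw [hsub, A.map_sub, AVAL w Rw hRw x, AVAL z' Rz' hRz' x, smul_sub, sub_smul]
      abel
    have h2 : Rw (-(A ⟨Rw x - Rz' x, hmem⟩) + w • (Rw x - Rz' x)) = Rw x - Rz' x :=
      hRw.2.2 ⟨Rw x - Rz' x, hmem⟩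
    rw [harg, map_smul] at h2
    exact h2.symm
  have LADJ : ∀ (z' : ℂ) (Rz' Rb : H →L[ℂ] H), IsResolvent A z' Rz' →
      IsResolvent A (starRingEnd ℂ z') Rb → ∀ (x y : H), ⟪Rz' y, x⟫_ℂ = ⟪y, Rb x⟫_ℂ := by
    intro z' Rz' Rb hRz' hRb x y
    have hx : x = -(A ⟨Rb x, hRb.1 x⟩) + (starRingEnd ℂ z') • Rb x :=
      (hRb.2.1 x (hRb.1 x)).symm
    have hAy : A ⟨Rz' y, hRz'.1 y⟩ = z' • Rz' y - y := AVAL z' Rz' hRz' y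
    have hsymAb : ⟪Rz' y, A ⟨Rb x, hRb.1 x⟩⟫_ℂ = ⟪A ⟨Rz' y, hRz'.1 y⟩, Rb x⟫_ℂ :=
      (hA.2.1 ⟨Rz' y, hRz'.1 y⟩ ⟨Rb x, hRb.1 x⟩).symm
    calc ⟪Rz' y, x⟫_ℂ
        = ⟪Rz' y, -(A ⟨Rb x, hRb.1 x⟩) + (starRingEnd ℂ z') • Rb x⟫_ℂ := by rw [← hx]
    _ = -⟪A ⟨Rz' y, hRz'.1 y⟩, Rb x⟫_ℂ + (starRingEnd ℂ z') * ⟪Rz' y, Rb x⟫_ℂ := by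
        rw [inner_add_right, inner_neg_right, inner_smul_right, hsymAb]
    _ = -⟪z' • Rz' y - y, Rb x⟫_ℂ + (starRingEnd ℂ z') * ⟪Rz' y, Rb x⟫_ℂ := by rw [hAy]
    _ = ⟪y, Rb x⟫_ℂ := by
        rw [inner_sub_left, inner_smul_left]
        ring
  have TSURJ : ∀ (z' : ℂ) (R' : H →L[ℂ] H) (hR' : IsResolvent A z' R') (Tz' : H →L[ℂ] h),
      (∀ x : H, Tz' x = τ ⟨R' x, hR'.1 x⟩) → Function.Surjective Tz' := by
    intro z' R' hR' Tz' hTz' ξ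
    obtain ⟨u, hu⟩ := hτsurj ξ
    refine ⟨-(A u) + z' • (u : H), ?_⟩
    rw [hTz']
    have he : (⟨R' (-(A u) + z' • (u : H)), hR'.1 _⟩ : A.domain) = u :=
      Subtype.ext (hR'.2.2 u)
    rw [he, hu]
  have GDIFF : ∀ (z' : ℂ) (Rz' Rb : H →L[ℂ] H) (hRz' : IsResolvent A z' Rz')
      (hRb : IsResolvent A (starRingEnd ℂ z') Rb) (ξ : h),
      (G ((lam0:ℝ):ℂ) ξ - G z' ξ = (z' - ((lam0:ℝ):ℂ)) • Rz' (G ((lam0:ℝ):ℂ) ξ))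
      ∧ (G ((lam0:ℝ):ℂ) ξ - G z' ξ = (z' - ((lam0:ℝ):ℂ)) • R₀ (G z' ξ)) := by
    intro z' Rz' Rb hRz' hRb ξ
    have hGz : ∀ (ζ : h) (x : H), ⟪G z' ζ, x⟫_ℂ = ⟪ζ, τ ⟨Rb x, hRb.1 x⟩⟫_ℂ :=
      fun ζ x => hG z' Rb hRb ζ x (hRb.1 x)
    have hconjz : starRingEnd ℂ (z' - ((lam0:ℝ):ℂ)) = starRingEnd ℂ z' - ((lam0:ℝ):ℂ) := by
      rw [map_sub, hconj0]
    constructor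
    · apply ext_inner_right ℂ
      intro v
      have hres2 := LRES2 ((lam0:ℝ):ℂ) (starRingEnd ℂ z') R₀ Rb hR₀ hRb v
      have hsubty : (⟨R₀ v, hR₀.1 v⟩ : A.domain) - ⟨Rb v, hRb.1 v⟩
          = (starRingEnd ℂ z' - ((lam0:ℝ):ℂ)) • ⟨R₀ (Rb v), hR₀.1 _⟩ := by
        apply Subtype.ext
        exact hres2
      have hτdiff : τ ⟨R₀ v, hR₀.1 v⟩ - τ ⟨Rb v, hRb.1 v⟩
          = (starRingEnd ℂ z' - ((lam0:ℝ):ℂ)) • Tc (Rb v) := by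
        rw [← map_sub, hsubty, map_smul, hTc]
      calc ⟪G ((lam0:ℝ):ℂ) ξ - G z' ξ, v⟫_ℂ
          = ⟪ξ, τ ⟨R₀ v, hR₀.1 v⟩⟫_ℂ - ⟪ξ, τ ⟨Rb v, hRb.1 v⟩⟫_ℂ := by
            rw [inner_sub_left, hG0, hTc, hGz]
      _ = ⟪ξ, τ ⟨R₀ v, hR₀.1 v⟩ - τ ⟨Rb v, hRb.1 v⟩⟫_ℂ := (inner_sub_right _ _ _).symm
      _ = (starRingEnd ℂ z' - ((lam0:ℝ):ℂ)) * ⟪ξ, Tc (Rb v)⟫_ℂ := by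
            rw [hτdiff, inner_smul_right]
      _ = (starRingEnd ℂ z' - ((lam0:ℝ):ℂ)) * ⟪G ((lam0:ℝ):ℂ) ξ, Rb v⟫_ℂ := by rw [hG0]
      _ = ⟪(z' - ((lam0:ℝ):ℂ)) • Rz' (G ((lam0:ℝ):ℂ) ξ), v⟫_ℂ := by
            rw [inner_smul_left, hconjz, LADJ z' Rz' Rb hRz' hRb v (G ((lam0:ℝ):ℂ) ξ)]
    · apply ext_inner_right ℂ
      intro v
      have hres2' := LRES2 (starRingEnd ℂ z') ((lam0:ℝ):ℂ) Rb R₀ hRb hR₀ v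
      have hres2 : R₀ v - Rb v = (starRingEnd ℂ z' - ((lam0:ℝ):ℂ)) • Rb (R₀ v) := by
        rw [← neg_sub (Rb v), hres2', ← neg_smul, neg_sub]
      have hsubty : (⟨R₀ v, hR₀.1 v⟩ : A.domain) - ⟨Rb v, hRb.1 v⟩
          = (starRingEnd ℂ z' - ((lam0:ℝ):ℂ)) • ⟨Rb (R₀ v), hRb.1 _⟩ := by
        apply Subtype.ext
        exact hres2
      have hτdiff : τ ⟨R₀ v, hR₀.1 v⟩ - τ ⟨Rb v, hRb.1 v⟩
          = (starRingEnd ℂ z' - ((lam0:ℝ):ℂ)) • τ ⟨Rb (R₀ v), hRb.1 _⟩ := by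
        rw [← map_sub, hsubty, map_smul]
      calc ⟪G ((lam0:ℝ):ℂ) ξ - G z' ξ, v⟫_ℂ
          = ⟪ξ, τ ⟨R₀ v, hR₀.1 v⟩⟫_ℂ - ⟪ξ, τ ⟨Rb v, hRb.1 v⟩⟫_ℂ := by
            rw [inner_sub_left, hG0, hTc, hGz]
      _ = ⟪ξ, τ ⟨R₀ v, hR₀.1 v⟩ - τ ⟨Rb v, hRb.1 v⟩⟫_ℂ := (inner_sub_right _ _ _).symm
      _ = (starRingEnd ℂ z' - ((lam0:ℝ):ℂ)) * ⟪ξ, τ ⟨Rb (R₀ v), hRb.1 _⟩⟫_ℂ := by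
            rw [hτdiff, inner_smul_right]
      _ = (starRingEnd ℂ z' - ((lam0:ℝ):ℂ)) * ⟪G z' ξ, R₀ v⟫_ℂ := by rw [hGz]
      _ = ⟪(z' - ((lam0:ℝ):ℂ)) • R₀ (G z' ξ), v⟫_ℂ := by
            rw [inner_smul_left, hconjz, LADJ ((lam0:ℝ):ℂ) R₀ R₀ hR₀ hR₀bar v (G z' ξ)]
  -- converse membership lemma
  have MEMB : ∀ (u₀ : H) (hu₀ : u₀ ∈ A.domain) (ξ : h) (hξ : ξ ∈ D),
      P (τ ⟨u₀, hu₀⟩) = Θ ⟨ξ, hξ⟩ → u₀ + G ((lam0:ℝ):ℂ) ξ ∈ B.domain := by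
    intro u₀ hu₀ ξ hξ hPθ
    obtain ⟨v₀, hv₀, hvB⟩ := (hD_mem ξ).mp hξ
    have hPv : Θ ⟨ξ, hξ⟩ = P (τ ⟨v₀, hv₀⟩) := ΘSPEC ξ hξ v₀ hv₀ hvB
    have hd : u₀ - v₀ ∈ A.domain := A.domain.sub_mem hu₀ hv₀
    have hτd : τ ⟨u₀ - v₀, hd⟩ = τ ⟨u₀, hu₀⟩ - τ ⟨v₀, hv₀⟩ := by
      have he : (⟨u₀ - v₀, hd⟩ : A.domain) = (⟨u₀, hu₀⟩ : A.domain) - ⟨v₀, hv₀⟩ := rfl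
      rw [he, map_sub]
    have hPzero : P (τ ⟨u₀ - v₀, hd⟩) = 0 := by
      rw [hτd, map_sub, hPθ, hPv, sub_self]
    have hMm : τ ⟨u₀ - v₀, hd⟩ ∈ Msub := PzeroInv _ hPzero
    obtain ⟨d, hdA, hdB, hτdd⟩ := (hMsub_mem _).mp hMm
    have he2 : u₀ - v₀ - d ∈ A.domain := A.domain.sub_mem hd hdA
    have hτe : τ ⟨u₀ - v₀ - d, he2⟩ = 0 := by
      have he : (⟨u₀ - v₀ - d, he2⟩ : A.domain)
          = (⟨u₀ - v₀, hd⟩ : A.domain) - ⟨d, hdA⟩ := rfl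
      rw [he, map_sub, hτdd, sub_self]
    obtain ⟨heB, hBe⟩ := hBextS ⟨u₀ - v₀ - d, he2⟩ hτe
    have hsum : u₀ + G ((lam0:ℝ):ℂ) ξ
        = ((v₀ + G ((lam0:ℝ):ℂ) ξ) + d) + (u₀ - v₀ - d) := by abel
    rw [hsum]
    exact B.domain.add_mem (B.domain.add_mem hvB hdB) heB
  -- solvability of the boundary problem for nonreal z
  have hKrein : ∀ z : ℂ, z.im ≠ 0 →
      InResolventSet A z ∧ ∃ W : h →L[ℂ] h, IsKreinInverse P Θ (M z) W := by
    intro z hzim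
    have hzbim : ((starRingEnd ℂ) z).im ≠ 0 := by
      simp only [Complex.conj_im]
      exact neg_ne_zero.mpr hzim
    obtain ⟨Rz, hRz⟩ := sa_resolvent_nonreal hA hzim
    obtain ⟨Rb, hRb⟩ := sa_resolvent_nonreal hA hzbim
    obtain ⟨RBz, hRBz⟩ := sa_resolvent_nonreal hB hzim
    obtain ⟨Tz, hTz⟩ := TCL z Rz hRz
    obtain ⟨Tb, hTb⟩ := TCL (starRingEnd ℂ z) Rb hRb
    have hGd := GDIFF z Rz Rb hRz hRb
    have hGmem : ∀ ξ : h, G ((lam0:ℝ):ℂ) ξ - G z ξ ∈ A.domain := by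
      intro ξ
      rw [(hGd ξ).2]
      exact A.domain.smul_mem _ (hR₀.1 _)
    have hMz : ∀ ξ : h, M z ξ = τ ⟨G ((lam0:ℝ):ℂ) ξ - G z ξ, hGmem ξ⟩ :=
      fun ξ => hM z ξ (hGmem ξ)
    have hMz2 : ∀ ξ : h, M z ξ
        = (z - ((lam0:ℝ):ℂ)) • τ ⟨Rz (G ((lam0:ℝ):ℂ) ξ), hRz.1 _⟩ := by
      intro ξ
      rw [hMz ξ]
      have hsub : (⟨G ((lam0:ℝ):ℂ) ξ - G z ξ, hGmem ξ⟩ : A.domain)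
          = (z - ((lam0:ℝ):ℂ)) • (⟨Rz (G ((lam0:ℝ):ℂ) ξ), hRz.1 _⟩ : A.domain) :=
        Subtype.ext (hGd ξ).1
      rw [hsub, map_smul]
    have hG0φ : ∀ φ : h, G ((lam0:ℝ):ℂ) φ
        = G z φ + (z - ((lam0:ℝ):ℂ)) • R₀ (G z φ) := by
      intro φ
      have h1 := (hGd φ).2
      rw [← h1]
      abel
    have hGzinj : ∀ ξ : h, G z ξ = 0 → ξ = 0 := by
      intro ξ h0
      obtain ⟨x, hx⟩ := TSURJ (starRingEnd ℂ z) Rb hRb Tb hTb ξ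
      have h1 : ⟪G z ξ, x⟫_ℂ = ⟪ξ, ξ⟫_ℂ := by
        rw [hG z Rb hRb ξ x (hRb.1 x), ← hTb, hx]
      rw [h0, inner_zero_left] at h1
      exact inner_self_eq_zero.mp h1.symm
    obtain ⟨Lc, hLc⟩ : ∃ Lc : H →L[ℂ] h, ∀ x : H,
        Lc x = J (RBz x - R₀ (x + (((lam0:ℝ):ℂ) - z) • RBz x)) :=
      ⟨J.comp (RBz - R₀.comp (ContinuousLinearMap.id ℂ H + (((lam0:ℝ):ℂ) - z) • RBz)),
        fun x => by simp [ContinuousLinearMap.comp_apply]⟩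
    have hDECR : ∀ x : H, ∃ (u₀ : H) (hu₀ : u₀ ∈ A.domain) (ξ : h) (hξ : ξ ∈ D),
        RBz x = u₀ + G ((lam0:ℝ):ℂ) ξ ∧ Θ ⟨ξ, hξ⟩ = P (τ ⟨u₀, hu₀⟩) ∧ Lc x = ξ := by
      intro x
      obtain ⟨u₀, hu₀, ξ, hueq, hval⟩ := DEC ⟨RBz x, hRBz.1 x⟩
      have hueq' : RBz x = u₀ + G ((lam0:ℝ):ℂ) ξ := hueq
      have huB : u₀ + G ((lam0:ℝ):ℂ) ξ ∈ B.domain := hueq' ▸ hRBz.1 x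
      have hξD : ξ ∈ D := (hD_mem ξ).mpr ⟨u₀, hu₀, huB⟩
      refine ⟨u₀, hu₀, ξ, hξD, hueq', ΘSPEC ξ hξD u₀ hu₀ huB, ?_⟩
      have hBval : B ⟨RBz x, hRBz.1 x⟩
          = A ⟨u₀, hu₀⟩ + ((lam0:ℝ):ℂ) • G ((lam0:ℝ):ℂ) ξ := hval
      have hBres := hRBz.2.1 x (hRBz.1 x)
      have h6 : B ⟨RBz x, hRBz.1 x⟩ = z • RBz x - x := by
        have hh : z • RBz x - (-(B ⟨RBz x, hRBz.1 x⟩) + z • RBz x) = z • RBz x - x := by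
          rw [hBres]
        rw [← hh]; abel
      have h7 : A ⟨u₀, hu₀⟩ + ((lam0:ℝ):ℂ) • G ((lam0:ℝ):ℂ) ξ = z • RBz x - x :=
        hBval.symm.trans h6
      have h8 : A ⟨u₀, hu₀⟩ = z • RBz x - x - ((lam0:ℝ):ℂ) • G ((lam0:ℝ):ℂ) ξ := by
        rw [← h7]; abel
      have hAu₀eq : -(A ⟨u₀, hu₀⟩) + ((lam0:ℝ):ℂ) • u₀
          = x + (((lam0:ℝ):ℂ) - z) • RBz x := by
        rw [h8, hueq']
        module
      have hu₀R : R₀ (x + (((lam0:ℝ):ℂ) - z) • RBz x) = u₀ := by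
        have h9 := hR₀.2.2 ⟨u₀, hu₀⟩
        rw [hAu₀eq] at h9
        exact h9
      have h10 : RBz x - u₀ = G ((lam0:ℝ):ℂ) ξ := by rw [hueq']; abel
      rw [hLc x, hu₀R, h10, hJ ξ]
    have hSTAR : ∀ x : H, ∃ hLD : Lc x ∈ D,
        Θ ⟨Lc x, hLD⟩ + P (M z (Lc x)) = P (Tz x) := by
      intro x
      obtain ⟨u₀, hu₀, ξ, hξD, hueq, hθ, hLx⟩ := hDECR x
      have hLD : Lc x ∈ D := by rw [hLx]; exact hξD
      have huB : u₀ + G ((lam0:ℝ):ℂ) ξ ∈ B.domain := hueq ▸ hRBz.1 x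
      have hBval : B ⟨RBz x, hRBz.1 x⟩
          = A ⟨u₀, hu₀⟩ + ((lam0:ℝ):ℂ) • G ((lam0:ℝ):ℂ) ξ := by
        have hsub2 : (⟨RBz x, hRBz.1 x⟩ : B.domain)
            = ⟨u₀ + G ((lam0:ℝ):ℂ) ξ, huB⟩ := Subtype.ext hueq
        rw [hsub2]
        exact VAL u₀ hu₀ ξ huB
      have hBres := hRBz.2.1 x (hRBz.1 x)
      have hx : x = (-(A ⟨u₀, hu₀⟩) + z • u₀)
          + (z - ((lam0:ℝ):ℂ)) • G ((lam0:ℝ):ℂ) ξ := by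
        calc x = -(B ⟨RBz x, hRBz.1 x⟩) + z • RBz x := hBres.symm
        _ = -(A ⟨u₀, hu₀⟩ + ((lam0:ℝ):ℂ) • G ((lam0:ℝ):ℂ) ξ)
            + z • (u₀ + G ((lam0:ℝ):ℂ) ξ) := by rw [hBval, hueq]
        _ = (-(A ⟨u₀, hu₀⟩) + z • u₀) + (z - ((lam0:ℝ):ℂ)) • G ((lam0:ℝ):ℂ) ξ := by
            module
      have hRzx : Rz x = u₀ + (z - ((lam0:ℝ):ℂ)) • Rz (G ((lam0:ℝ):ℂ) ξ) := by
        rw [hx, map_add, map_smul]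
        have h1 : Rz (-(A ⟨u₀, hu₀⟩) + z • u₀) = u₀ := hRz.2.2 ⟨u₀, hu₀⟩
        rw [h1]
      have hτRzx : τ ⟨Rz x, hRz.1 x⟩ = τ ⟨u₀, hu₀⟩ + M z ξ := by
        have hsub : (⟨Rz x, hRz.1 x⟩ : A.domain) = (⟨u₀, hu₀⟩ : A.domain)
            + (z - ((lam0:ℝ):ℂ)) • (⟨Rz (G ((lam0:ℝ):ℂ) ξ), hRz.1 _⟩ : A.domain) :=
          Subtype.ext (by
            show Rz x = u₀ + (z - ((lam0:ℝ):ℂ)) • Rz (G ((lam0:ℝ):ℂ) ξ)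
            exact hRzx)
        rw [hsub, map_add, map_smul, ← hMz2]
      refine ⟨hLD, ?_⟩
      have h20 : Θ ⟨Lc x, hLD⟩ = Θ ⟨ξ, hξD⟩ := congrArg _ (Subtype.ext hLx)
      rw [h20, hLx, hTz x, hτRzx, map_add, hθ]
    have hTzsurj : Function.Surjective Tz := TSURJ z Rz hRz Tz hTz
    obtain ⟨Y, hY⟩ := right_inverse_of_surjective Tz hTzsurj
    refine ⟨⟨Rz, hRz⟩, Lc.comp Y, ?_, ?_, ?_⟩
    · intro x
      exact (hSTAR (Y (P x))).1
    · intro x hx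
      obtain ⟨hLD, hEq⟩ := hSTAR (Y (P x))
      have h13 : P (Tz (Y (P x))) = P x := by rw [hY (P x)]; exact PP x
      exact hEq.trans h13
    · intro φ
      have hζK : Θ φ + P (M z (φ : h)) ∈ K := K.add_mem (ΘK φ) (Pmem _)
      obtain ⟨hLD, hEq⟩ := hSTAR (Y (Θ φ + P (M z (φ : h))))
      set ξ' : h := Lc (Y (Θ φ + P (M z (φ : h)))) with hξ'def
      have h11 : Θ ⟨ξ', hLD⟩ + P (M z ξ') = Θ φ + P (M z (φ : h)) := by
        rw [hEq, hY, Pid _ hζK]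
      have hδD : ξ' - (φ : h) ∈ D := D.sub_mem hLD φ.2
      set δ : h := ξ' - (φ : h) with hδdef
      have hδ0 : Θ ⟨δ, hδD⟩ + P (M z δ) = 0 := by
        have hsubδ : (⟨δ, hδD⟩ : D) = ⟨ξ', hLD⟩ - ⟨(φ : h), φ.2⟩ := rfl
        rw [hsubδ, Θ.map_sub, Subtype.coe_eta, map_sub, map_sub]
        calc Θ ⟨ξ', hLD⟩ - Θ φ + (P (M z ξ') - P (M z (φ : h)))
            = (Θ ⟨ξ', hLD⟩ + P (M z ξ')) - (Θ φ + P (M z (φ : h))) := by abel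
        _ = 0 := by rw [h11]; exact sub_self _
      have hmemδ : G z δ - G ((lam0:ℝ):ℂ) δ ∈ A.domain := by
        have h14 : G z δ - G ((lam0:ℝ):ℂ) δ = -(G ((lam0:ℝ):ℂ) δ - G z δ) := by abel
        rw [h14]
        exact A.domain.neg_mem (hGmem δ)
      have hτδ : τ ⟨G z δ - G ((lam0:ℝ):ℂ) δ, hmemδ⟩ = -(M z δ) := by
        have hsubn : (⟨G z δ - G ((lam0:ℝ):ℂ) δ, hmemδ⟩ : A.domain)
            = -(⟨G ((lam0:ℝ):ℂ) δ - G z δ, hGmem δ⟩ : A.domain) :=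
          Subtype.ext (by
            show G z δ - G ((lam0:ℝ):ℂ) δ = -(G ((lam0:ℝ):ℂ) δ - G z δ)
            abel)
        rw [hsubn, map_neg, ← hMz]
      have hPτδ : P (τ ⟨G z δ - G ((lam0:ℝ):ℂ) δ, hmemδ⟩) = Θ ⟨δ, hδD⟩ := by
        rw [hτδ, map_neg]
        calc -(P (M z δ)) = -(P (M z δ)) + (Θ ⟨δ, hδD⟩ + P (M z δ)) := by
              rw [hδ0, add_zero]
        _ = Θ ⟨δ, hδD⟩ := by abel
      have hvB : (G z δ - G ((lam0:ℝ):ℂ) δ) + G ((lam0:ℝ):ℂ) δ ∈ B.domain :=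
        MEMB _ hmemδ δ hδD hPτδ
      have hveq : (G z δ - G ((lam0:ℝ):ℂ) δ) + G ((lam0:ℝ):ℂ) δ = G z δ := by abel
      have hvB' : G z δ ∈ B.domain := hveq ▸ hvB
      have hBv : B ⟨G z δ, hvB'⟩ = z • G z δ := by
        have hsub2 : (⟨G z δ, hvB'⟩ : B.domain)
            = ⟨(G z δ - G ((lam0:ℝ):ℂ) δ) + G ((lam0:ℝ):ℂ) δ, hvB⟩ :=
          Subtype.ext hveq.symm
        rw [hsub2, VAL (G z δ - G ((lam0:ℝ):ℂ) δ) hmemδ δ hvB]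
        have hA2 : A ⟨G z δ - G ((lam0:ℝ):ℂ) δ, hmemδ⟩
            = (((lam0:ℝ):ℂ) - z) • (((lam0:ℝ):ℂ) • R₀ (G z δ) - G z δ) := by
          have hsubn : (⟨G z δ - G ((lam0:ℝ):ℂ) δ, hmemδ⟩ : A.domain)
              = (((lam0:ℝ):ℂ) - z) • (⟨R₀ (G z δ), hR₀.1 _⟩ : A.domain) :=
            Subtype.ext (by
              show G z δ - G ((lam0:ℝ):ℂ) δ = (((lam0:ℝ):ℂ) - z) • R₀ (G z δ)
              have h21 : (((lam0:ℝ):ℂ) - z) • R₀ (G z δ)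
                  = -((z - ((lam0:ℝ):ℂ)) • R₀ (G z δ)) := by module
              rw [h21, ← (hGd δ).2]
              abel)
          rw [hsubn, A.map_smul, AVAL ((lam0:ℝ):ℂ) R₀ hR₀ (G z δ)]
        rw [hA2, hG0φ δ]
        module
      have hres3 := hRBz.2.2 ⟨G z δ, hvB'⟩
      have h15 : -(B ⟨G z δ, hvB'⟩) + z • ((⟨G z δ, hvB'⟩ : B.domain) : H) = 0 := by
        rw [hBv]
        show -(z • G z δ) + z • G z δ = 0
        abel
      rw [h15, map_zero] at hres3
      have hδzero : δ = 0 := hGzinj δ hres3.symm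
      show Lc (Y (Θ φ + P (M z (φ : h)))) = (φ : h)
      exact sub_eq_zero.mp hδzero
  -- the five main assertions
  refine ⟨P, Θ, ⟨?_, Psym⟩, ⟨?_, ?_, ?_, ?_, ?_⟩, ?_, ?_, ?_, ?_, ?_⟩
  · -- idempotent
    show P * P = P
    ext x
    show P (P x) = P x
    exact PP x
  · -- Θ.domain ≤ range P
    rw [PranK]
    exact hDK
  · -- Θ maps into range P
    intro φ
    exact PranK ▸ (Pmem _)
  · -- density of the domain in ran P
    intro x hx
    rw [PranK] at hx
    set Dc := D.topologicalClosure with hDc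
    have hDcc : IsClosed (Dc : Set h) := D.isClosed_topologicalClosure
    haveI : CompleteSpace Dc := hDcc.completeSpace_coe
    set p := ((Submodule.orthogonalProjection Dc x : Dc) : h) with hpdef
    have hpD : p ∈ closure (D : Set h) := by
      have := (Submodule.orthogonalProjection Dc x).2
      rw [← Submodule.topologicalClosure_coe]
      exact this
    have hyD : x - p ∈ Dcᗮ := Submodule.sub_starProjection_mem_orthogonal x
    have hpK : p ∈ K := by
      have hclsub : closure (D : Set h) ⊆ (K : Set h) :=
        closure_minimal hDK hKclosed
      exact hclsub hpD
    have hyK : x - p ∈ K := K.sub_mem hx hpK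
    have hyp : ∀ (v₀ : H) (hv₀ : v₀ ∈ A.domain) (ζ : h),
        v₀ + G ((lam0:ℝ):ℂ) ζ ∈ B.domain → ⟪x - p, ζ⟫_ℂ = ⟪(0:h), τ ⟨v₀, hv₀⟩⟫_ℂ := by
      intro v₀ hv₀ ζ hvB
      rw [inner_zero_left]
      have hζD : ζ ∈ D := (hD_mem ζ).mpr ⟨v₀, hv₀, hvB⟩
      have hζDc : ζ ∈ Dc := Submodule.le_topologicalClosure D hζD
      exact (Submodule.mem_orthogonal' Dc (x - p)).mp hyD ζ hζDc
    obtain ⟨u₀, hu₀, hτu, hmemB⟩ := MAX 0 (x - p) hyp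
    rw [hG00, add_zero] at hmemB
    have hyM : x - p ∈ Msub := (hMsub_mem _).mpr ⟨u₀, hu₀, hmemB, hτu⟩
    have h0 : ⟪x - p, x - p⟫_ℂ = 0 := hKMperp _ hyK _ hyM
    have h1 : x = p := sub_eq_zero.mp (inner_self_eq_zero.mp h0)
    show x ∈ closure ((D : Submodule ℂ h) : Set h)
    rw [h1]
    exact hpD
  · -- symmetry of Θ
    intro φ ψ
    have hφK : (φ : h) ∈ K := hDK φ.2
    have hψK : (ψ : h) ∈ K := hDK ψ.2
    have e1 : ⟪Θ φ, (ψ : h)⟫_ℂ = ⟪τ ⟨w₀f φ, hw₀fA φ⟩, (ψ : h)⟫_ℂ := by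
      show ⟪P (τ ⟨w₀f φ, hw₀fA φ⟩), (ψ : h)⟫_ℂ = _
      rw [Psym, Pid _ hψK]
    have e2 : ⟪(φ : h), τ ⟨w₀f ψ, hw₀fA ψ⟩⟫_ℂ = ⟪τ ⟨w₀f φ, hw₀fA φ⟩, (ψ : h)⟫_ℂ :=
      GRN (w₀f φ) (hw₀fA φ) (φ : h) (hw₀fB φ) (w₀f ψ) (hw₀fA ψ) (ψ : h) (hw₀fB ψ)
    have e3 : ⟪(φ : h), Θ ψ⟫_ℂ = ⟪(φ : h), τ ⟨w₀f ψ, hw₀fA ψ⟩⟫_ℂ := by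
      show ⟪(φ : h), P (τ ⟨w₀f ψ, hw₀fA ψ⟩)⟫_ℂ = _
      rw [← Psym ((φ : h)) (τ ⟨w₀f ψ, hw₀fA ψ⟩), Pid _ hφK]
    rw [e1, e3, e2]
  · -- maximality of Θ
    intro ψ hψ w hw hyp
    rw [PranK] at hψ hw
    have hypMAX : ∀ (v₀ : H) (hv₀ : v₀ ∈ A.domain) (ζ : h),
        v₀ + G ((lam0:ℝ):ℂ) ζ ∈ B.domain → ⟪w, ζ⟫_ℂ = ⟪ψ, τ ⟨v₀, hv₀⟩⟫_ℂ := by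
      intro v₀ hv₀ ζ hvB
      have hζD : ζ ∈ D := (hD_mem ζ).mpr ⟨v₀, hv₀, hvB⟩
      have hθζ : Θ ⟨ζ, hζD⟩ = P (τ ⟨v₀, hv₀⟩) := ΘSPEC ζ hζD v₀ hv₀ hvB
      have h2 : ⟪ψ, τ ⟨v₀, hv₀⟩⟫_ℂ = ⟪ψ, P (τ ⟨v₀, hv₀⟩)⟫_ℂ := by
        rw [← Psym ψ (τ ⟨v₀, hv₀⟩), Pid _ hψ]
      rw [h2, ← hθζ]
      exact (hyp ⟨ζ, hζD⟩).symm
    obtain ⟨u₀, hu₀, hτu, hmemB⟩ := MAX ψ w hypMAX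
    have hψD : ψ ∈ D := (hD_mem ψ).mpr ⟨u₀, hu₀, hmemB⟩
    refine ⟨hψD, ?_⟩
    have := ΘSPEC ψ hψD u₀ hu₀ hmemB
    rw [this, hτu]
    exact Pid _ hw
  · -- decomposition of dom B
    intro u
    obtain ⟨u₀, hu₀, ξ, hueq, hval⟩ := DEC u
    have huB : u₀ + G ((lam0:ℝ):ℂ) ξ ∈ B.domain := hueq ▸ u.2
    have hξD : ξ ∈ D := (hD_mem ξ).mpr ⟨u₀, hu₀, huB⟩
    exact ⟨u₀, hu₀, ξ, hξD, hueq, (ΘSPEC ξ hξD u₀ hu₀ huB).symm, hval⟩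
  · -- converse inclusion of the domain
    intro u₀ hu₀ ξ hξ hPθ
    have hmem : u₀ + G ((lam0:ℝ):ℂ) ξ ∈ B.domain := MEMB u₀ hu₀ ξ hξ hPθ
    exact ⟨hmem, VAL u₀ hu₀ ξ hmem⟩
  · -- nonemptiness of the Kreĭn set
    exact ⟨Complex.I, hKrein Complex.I (by norm_num)⟩
  · -- the nonreal points belong to the Kreĭn set
    exact fun z hz => hKrein z hz
  · -- the Kreĭn resolvent formula
    intro z hzK R hR W hW
    have hRb : IsResolvent A (starRingEnd ℂ z) (ContinuousLinearMap.adjoint R) :=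
      resolvent_adjoint hA hR
    set Rb : H →L[ℂ] H := ContinuousLinearMap.adjoint R with hRbdef
    obtain ⟨Tz, hTz⟩ := TCL z R hR
    have hGd := GDIFF z R Rb hR hRb
    have hGmem : ∀ ξ : h, G ((lam0:ℝ):ℂ) ξ - G z ξ ∈ A.domain := by
      intro ξ
      rw [(hGd ξ).2]
      exact A.domain.smul_mem _ (hR₀.1 _)
    have hMz : ∀ ξ : h, M z ξ = τ ⟨G ((lam0:ℝ):ℂ) ξ - G z ξ, hGmem ξ⟩ :=
      fun ξ => hM z ξ (hGmem ξ)
    have hMz1 : ∀ ξ : h, M z ξ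
        = (z - ((lam0:ℝ):ℂ)) • τ ⟨R₀ (G z ξ), hR₀.1 _⟩ := by
      intro ξ
      rw [hMz ξ]
      have hsub : (⟨G ((lam0:ℝ):ℂ) ξ - G z ξ, hGmem ξ⟩ : A.domain)
          = (z - ((lam0:ℝ):ℂ)) • (⟨R₀ (G z ξ), hR₀.1 _⟩ : A.domain) :=
        Subtype.ext (hGd ξ).2
      rw [hsub, map_smul]
    have hMz2 : ∀ ξ : h, M z ξ
        = (z - ((lam0:ℝ):ℂ)) • τ ⟨R (G ((lam0:ℝ):ℂ) ξ), hR.1 _⟩ := by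
      intro ξ
      rw [hMz ξ]
      have hsub : (⟨G ((lam0:ℝ):ℂ) ξ - G z ξ, hGmem ξ⟩ : A.domain)
          = (z - ((lam0:ℝ):ℂ)) • (⟨R (G ((lam0:ℝ):ℂ) ξ), hR.1 _⟩ : A.domain) :=
        Subtype.ext (hGd ξ).1
      rw [hsub, map_smul]
    obtain ⟨RB, hRBdef⟩ : ∃ RB : H →L[ℂ] H, ∀ x : H, RB x = R x + G z (W (P (Tz x))) :=
      ⟨R + (G z).comp (W.comp (P.comp Tz)), fun x => rfl⟩
    have hG0φ : ∀ φ : h, G ((lam0:ℝ):ℂ) φ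
        = G z φ + (z - ((lam0:ℝ):ℂ)) • R₀ (G z φ) := by
      intro φ
      have h1 := (hGd φ).2
      rw [← h1]
      abel
    -- membership and value of RB x
    have hRBmem : ∀ x : H, ∃ hm : RB x ∈ B.domain,
        B ⟨RB x, hm⟩ = A ⟨R x - (z - ((lam0:ℝ):ℂ)) • R₀ (G z (W (P (Tz x)))),
          A.domain.sub_mem (hR.1 x) (A.domain.smul_mem _ (hR₀.1 _))⟩
          + ((lam0:ℝ):ℂ) • G ((lam0:ℝ):ℂ) (W (P (Tz x))) := by
      intro x
      set φ : h := W (P (Tz x)) with hφdef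
      have hφD : φ ∈ D := hW.1 (Tz x)
      set u₀ : H := R x - (z - ((lam0:ℝ):ℂ)) • R₀ (G z φ) with hu₀def
      have hu₀ : u₀ ∈ A.domain :=
        A.domain.sub_mem (hR.1 x) (A.domain.smul_mem _ (hR₀.1 _))
      have heq : RB x = u₀ + G ((lam0:ℝ):ℂ) φ := by
        rw [hRBdef x, hu₀def, hG0φ φ]
        abel
      have hτu₀ : τ ⟨u₀, hu₀⟩ = Tz x - M z φ := by
        have hsub : (⟨u₀, hu₀⟩ : A.domain) = (⟨R x, hR.1 x⟩ : A.domain)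
            - (z - ((lam0:ℝ):ℂ)) • (⟨R₀ (G z φ), hR₀.1 _⟩ : A.domain) := Subtype.ext rfl
        rw [hsub, map_sub, map_smul, ← hTz, ← hMz1]
      have hPτ : P (τ ⟨u₀, hu₀⟩) = Θ ⟨φ, hφD⟩ := by
        rw [hτu₀, map_sub]
        have h2 := hW.2.1 (Tz x) (hW.1 (Tz x))
        have h3 : Θ ⟨φ, hφD⟩ + P (M z φ) = P (Tz x) := h2
        rw [← h3]
        abel
      have hmem' : u₀ + G ((lam0:ℝ):ℂ) φ ∈ B.domain := MEMB u₀ hu₀ φ hφD hPτ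
      have hmem : RB x ∈ B.domain := by rw [heq]; exact hmem'
      refine ⟨hmem, ?_⟩
      have hsub2 : (⟨RB x, hmem⟩ : B.domain) = ⟨u₀ + G ((lam0:ℝ):ℂ) φ, hmem'⟩ :=
        Subtype.ext heq
      rw [hsub2]
      exact VAL u₀ hu₀ φ hmem'
    refine ⟨RB, ⟨fun x => (hRBmem x).1, ?_, ?_⟩, ?_⟩
    · -- resolvent identity on the range
      intro x hx
      obtain ⟨hm, hBval⟩ := hRBmem x
      have hx' : B ⟨RB x, hx⟩ = B ⟨RB x, hm⟩ := rfl
      rw [hx', hBval, hRBdef x]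
      set φ : h := W (P (Tz x)) with hφdef
      have hAu₀ : A ⟨R x - (z - ((lam0:ℝ):ℂ)) • R₀ (G z φ),
          A.domain.sub_mem (hR.1 x) (A.domain.smul_mem _ (hR₀.1 _))⟩
          = (z • R x - x) - (z - ((lam0:ℝ):ℂ))
            • (((lam0:ℝ):ℂ) • R₀ (G z φ) - G z φ) := by
        have hsub : (⟨R x - (z - ((lam0:ℝ):ℂ)) • R₀ (G z φ), _⟩ : A.domain)
            = (⟨R x, hR.1 x⟩ : A.domain)
              - (z - ((lam0:ℝ):ℂ)) • (⟨R₀ (G z φ), hR₀.1 _⟩ : A.domain) := Subtype.ext rfl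
        rw [hsub, A.map_sub, A.map_smul, AVAL z R hR x, AVAL ((lam0:ℝ):ℂ) R₀ hR₀ (G z φ)]
      rw [hAu₀, hG0φ φ]
      module
    · -- RB inverts -B + z on dom B
      intro u
      obtain ⟨u₀', hu₀', ξ, hueq, hval⟩ := DEC u
      have huB : u₀' + G ((lam0:ℝ):ℂ) ξ ∈ B.domain := hueq ▸ u.2
      have hξD : ξ ∈ D := (hD_mem ξ).mpr ⟨u₀', hu₀', huB⟩
      have hθ : Θ ⟨ξ, hξD⟩ = P (τ ⟨u₀', hu₀'⟩) := ΘSPEC ξ hξD u₀' hu₀' huB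
      set y : H := -(B u) + z • (u : H) with hydef
      have hy : y = (-(A ⟨u₀', hu₀'⟩) + z • u₀')
          + (z - ((lam0:ℝ):ℂ)) • G ((lam0:ℝ):ℂ) ξ := by
        rw [hydef, hval, hueq]
        module
      have hRy : R y = u₀' + (z - ((lam0:ℝ):ℂ)) • R (G ((lam0:ℝ):ℂ) ξ) := by
        rw [hy, map_add, map_smul]
        have h1 : R (-(A ⟨u₀', hu₀'⟩) + z • u₀') = u₀' := hR.2.2 ⟨u₀', hu₀'⟩
        rw [h1]
      have hτRy : τ ⟨R y, hR.1 y⟩ = τ ⟨u₀', hu₀'⟩ + M z ξ := by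
        have hsub : (⟨R y, hR.1 y⟩ : A.domain) = (⟨u₀', hu₀'⟩ : A.domain)
            + (z - ((lam0:ℝ):ℂ)) • (⟨R (G ((lam0:ℝ):ℂ) ξ), hR.1 _⟩ : A.domain) :=
          Subtype.ext (by
            show R y = u₀' + (z - ((lam0:ℝ):ℂ)) • R (G ((lam0:ℝ):ℂ) ξ)
            exact hRy)
        rw [hsub, map_add, map_smul, ← hMz2]
      have hWy : W (P (Tz y)) = ξ := by
        rw [hTz y, hτRy, map_add, ← hθ]
        exact hW.2.2 ⟨ξ, hξD⟩
      show RB y = (u : H)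
      rw [hRBdef y, hWy, hRy, ← (hGd ξ).1, hueq]
      abel
    · -- the explicit formula
      intro x hx
      rw [hRBdef x]
      have hTzx : Tz x = i32 (γ₀ ⟨R x, hx⟩) + i12 (γ₁ ⟨R x, hx⟩) := by
        rw [hTz x]
        exact hτ _
      rw [hTzx]

end
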